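/- arXiv:0704.3278 — 5 statements merged into one kernel-verified Lean document; each statement's English description precedes it below -/
import Mathlib

section
/- For every prime p and every integer ℓ ≥ 1 one has r^{p^ℓ} ∈ pP + [P,P]; that is, there exists s ∈ P with p·s − r^{p^ℓ} ∈ [P,P], so the class of r^{p^ℓ} in P_cyc = P/[P,P] is divisible by p. -/
noncomputable section

/-- The set of commutators `a*b - b*a` in a ring. -/
def commSet (A : Type*) [Ring A] : Set A := {x | ∃ a b : A, x = a * b - b * a}

/-- The additive subgroup `[A,A]` generated by commutators. -/
def commAdd (A : Type*) [Ring A] : AddSubgroup A := AddSubgroup.closure (commSet A)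

/-- `P = ℤ⟨x₁,…,xₙ,y₁,…,yₙ⟩`, the free associative `ℤ`-algebra on `2n` generators. -/
abbrev P (n : ℕ) : Type := FreeAlgebra ℤ (Fin n ⊕ Fin n)

/-- The generator `xᵢ`. -/
def Xg {n : ℕ} (i : Fin n) : P n := FreeAlgebra.ι ℤ (Sum.inl i)

/-- The generator `yᵢ`. -/
def Yg {n : ℕ} (i : Fin n) : P n := FreeAlgebra.ι ℤ (Sum.inr i)

/-- `r = ∑ᵢ (xᵢyᵢ − yᵢxᵢ)`. -/
def rEl (n : ℕ) : P n := ∑ i : Fin n, (Xg i * Yg i - Yg i * Xg i)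

/-!
Call `x ∈ A` *`p`-divisible* if its class in `A_cyc = A/[A,A]` lies in `p • A_cyc`, that is,
`x ∈ pA + [A,A]`. Expand `(a + b)^p` into the `2^p` words of length `p` in `a` and `b`: cyclic
rotation of words generates an action of `ℤ/p` that preserves the class of a word in `A_cyc`,
the non-constant words form orbits of size `p`, and the two constant words give `a^p + b^p`.
So `(a + b)^p - a^p - b^p` is `p`-divisible. With `(ab)^p ≡ (ba)^p mod [A,A]` this shows that
`x ↦ x^p` maps `[A,A]`, hence all of `pA + [A,A]`, into `pA + [A,A]`; iterate from `r ∈ [P,P]`.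
-/

open Finset MulAction

theorem IsPGroup.exists_sum_eq_sum_fixedPoints_add_nsmul {p : ℕ} [Fact p.Prime]
    {G X M : Type*} [Group G] [MulAction G X] [Fintype X]
    [DecidablePred (· ∈ fixedPoints G X)] [AddCommGroup M] (hG : IsPGroup p G)
    (f : X → M) (hf : ∀ (g : G) x, f (g • x) = f x) :
    ∃ m : M, ∑ x, f x = ∑ x with x ∈ fixedPoints G X, f x + p • m := by
  classical
  have hfixed (g : G) (x : X) : g • x ∈ fixedPoints G X ↔ x ∈ fixedPoints G X := by
    refine ⟨fun h => ?_, fun h => by rwa [h g]⟩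
    rwa [← inv_smul_smul g x, h g⁻¹]
  -- `f'` vanishes on fixed points, so an orbit sum `|orbit| • f' x` is `0` or has `p ∣ |orbit|`
  let f' x := if x ∈ fixedPoints G X then 0 else f x
  have horbit (ω : orbitRel.Quotient G X) :
      ∑ y : orbit G ω.out, f' y ∈ (nsmulAddMonoidHom p : M →+ M).range := by
    have hconst : ∀ y : orbit G ω.out, f' y = f' ω.out := by
      rintro ⟨_, g, rfl⟩
      simp only [f', hfixed, hf]
    rw [Fintype.sum_congr _ _ hconst, sum_const, card_univ]
    by_cases hfix : ω.out ∈ fixedPoints G X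
    · exact ⟨0, by rw [map_zero, show f' ω.out = 0 from if_pos hfix, smul_zero]⟩
    obtain ⟨k, hk⟩ := hG.card_orbit ω.out
    have hk0 : k ≠ 0 := by
      rintro rfl
      rw [mem_fixedPoints_iff_card_orbit_eq_one, Fintype.card_eq_nat_card, hk, pow_zero] at hfix
      exact hfix rfl
    refine ⟨p ^ (k - 1) • f' ω.out, ?_⟩
    rw [nsmulAddMonoidHom_apply, ← mul_nsmul', ← pow_succ',
      Nat.sub_add_cancel (Nat.one_le_iff_ne_zero.2 hk0), Fintype.card_eq_nat_card, hk]
  obtain ⟨m, hm⟩ : ∑ x, f' x ∈ (nsmulAddMonoidHom p : M →+ M).range := by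
    rw [← (selfEquivSigmaOrbits G X).symm.sum_comp, Fintype.sum_sigma]
    exact AddSubgroup.sum_mem _ fun ω _ => horbit ω
  refine ⟨m, ?_⟩
  rw [← sum_filter_add_sum_filter_not univ (· ∈ fixedPoints G X), ← nsmulAddMonoidHom_apply,
    hm, sum_filter (· ∉ fixedPoints G X)]
  simp only [f', ite_not]

namespace Equiv.Perm

theorem apply_zpow_apply_eq {X Y : Type*} {σ : Perm X} {f : X → Y} (hf : ∀ x, f (σ x) = f x)
    (k : ℤ) (x : X) : f ((σ ^ k) x) = f x := by
  induction k using Int.induction_on generalizing x with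
  | zero => rfl
  | succ k ih => rw [zpow_add_one, mul_apply, ih, hf]
  | pred k ih => rw [zpow_sub_one, mul_apply, ih, ← hf]; simp

theorem exists_sum_eq_sum_fixed_add_nsmul {p n : ℕ} [Fact p.Prime] {X M : Type*} [Fintype X]
    [DecidableEq X] [AddCommGroup M] {σ : Perm X} (hσ : σ ^ p ^ n = 1) (f : X → M)
    (hf : ∀ x, f (σ x) = f x) :
    ∃ m : M, ∑ x, f x = ∑ x with σ x = x, f x + p • m := by
  classical
  have hG : IsPGroup p (Subgroup.zpowers σ) := by
    rintro ⟨_, k, rfl⟩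
    refine ⟨n, Subtype.ext ?_⟩
    simp only [SubgroupClass.coe_pow, OneMemClass.coe_one]
    rw [← zpow_natCast, ← zpow_mul, mul_comm, zpow_mul, zpow_natCast, hσ, one_zpow]
  obtain ⟨m, hm⟩ := hG.exists_sum_eq_sum_fixedPoints_add_nsmul f <| by
    rintro ⟨_, k, rfl⟩ x
    exact apply_zpow_apply_eq hf k x
  refine ⟨m, hm.trans ?_⟩
  congr 2
  ext x
  simp only [mem_filter, mem_univ, true_and, mem_fixedPoints, Subtype.forall, Subgroup.smul_def]
  refine ⟨fun h => h σ (Subgroup.mem_zpowers σ), ?_⟩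
  rintro h _ ⟨k, rfl⟩
  exact zpow_apply_eq_self_of_apply_eq_self h k

end Equiv.Perm

theorem finRotate_pow_self (n : ℕ) : finRotate n ^ n = 1 := by
  rcases n with _ | _ | k
  · rfl
  · exact (pow_one _).trans finRotate_one
  · have h := pow_orderOf_eq_one (finRotate (k + 2))
    rwa [isCycle_finRotate.orderOf, support_finRotate, card_univ, Fintype.card_fin] at h

def rotateWord (m : ℕ) (β : Type*) : Equiv.Perm (Fin m → β) :=
  (finRotate m).symm.arrowCongr (Equiv.refl β)

section RotateWord

variable {β : Type*}

theorem rotateWord_apply {m : ℕ} (w : Fin m → β) : rotateWord m β w = w ∘ finRotate m :=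
  rfl

theorem rotateWord_pow_apply {m : ℕ} (j : ℕ) (w : Fin m → β) :
    (rotateWord m β ^ j) w = w ∘ ⇑(finRotate m ^ j) := by
  induction j with
  | zero => rfl
  | succ j ih => rw [pow_succ', Equiv.Perm.mul_apply, ih, pow_succ, Equiv.Perm.coe_mul]; rfl

theorem rotateWord_pow_self (m : ℕ) : rotateWord m β ^ m = 1 := by
  ext w : 1
  rw [rotateWord_pow_apply, finRotate_pow_self]
  rfl

theorem rotateWord_eq_self_iff {m : ℕ} {w : Fin (m + 1) → β} :
    rotateWord (m + 1) β w = w ↔ ∃ c, w = fun _ => c := by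
  rw [rotateWord_apply]
  refine ⟨fun h => ⟨w 0, funext fun i => ?_⟩, ?_⟩
  · induction i using Fin.induction with
    | zero => rfl
    | succ i ih =>
      rw [← ih, ← Fin.coeSucc_eq_succ, ← finRotate_apply, ← Function.comp_apply (f := w), h]
  · rintro ⟨c, rfl⟩
    rfl

end RotateWord

theorem filter_rotateWord_eq_self (m : ℕ) :
    ({w | rotateWord (m + 1) Bool w = w} : Finset _) = {fun _ => true, fun _ => false} := by
  ext w
  simp only [mem_filter, mem_univ, true_and, mem_insert, mem_singleton]
  rw [rotateWord_eq_self_iff, Bool.exists_bool, or_comm]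

section Ring

variable {A : Type*} [Ring A]

theorem mul_sub_mul_mem_commAdd (a b : A) : a * b - b * a ∈ commAdd A :=
  AddSubgroup.subset_closure ⟨a, b, rfl⟩

theorem mul_pow_sub_mul_pow_mem_commAdd (a b : A) (n : ℕ) :
    (a * b) ^ n - (b * a) ^ n ∈ commAdd A := by
  cases n with
  | zero => simp
  | succ n =>
    rw [pow_succ', pow_succ, ← mul_assoc, mul_pow_mul, mul_assoc]
    exact mul_sub_mul_mem_commAdd _ _

theorem prod_ofFn_comp_finRotate_sub_mem_commAdd {m : ℕ} (g : Fin (m + 1) → A) :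
    (List.ofFn (g ∘ finRotate (m + 1))).prod - (List.ofFn g).prod ∈ commAdd A := by
  have hcast (i : Fin m) : finRotate (m + 1) i.castSucc = i.succ := by
    rw [finRotate_apply, Fin.coeSucc_eq_succ]
  rw [List.ofFn_succ' (g ∘ _), List.ofFn_succ (f := g)]
  simp only [Function.comp_apply, hcast, finRotate_last, List.concat_eq_append, List.prod_append,
    List.prod_cons, List.prod_nil, mul_one]
  exact mul_sub_mul_mem_commAdd _ _

def wordProd (a b : A) {m : ℕ} (w : Fin m → Bool) : A :=
  (List.ofFn fun i => bif w i then a else b).prod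

theorem add_pow_eq_sum_wordProd (a b : A) (m : ℕ) :
    (a + b) ^ m = ∑ w : Fin m → Bool, wordProd a b w := by
  induction m with
  | zero => simp [wordProd]
  | succ m ih =>
    rw [← (Fin.consEquiv fun _ => Bool).sum_comp, Fintype.sum_prod_type, Fintype.sum_bool,
      pow_succ', ih, add_mul, mul_sum, mul_sum]
    simp [wordProd, List.ofFn_succ]

theorem wordProd_rotateWord_sub_mem_commAdd (a b : A) {m : ℕ} (w : Fin (m + 1) → Bool) :
    wordProd a b (rotateWord (m + 1) Bool w) - wordProd a b w ∈ commAdd A :=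
  prod_ofFn_comp_finRotate_sub_mem_commAdd fun i => bif w i then a else b

theorem wordProd_const (a b : A) (m : ℕ) (c : Bool) :
    wordProd a b (fun _ : Fin m => c) = (bif c then a else b) ^ m := by
  simp [wordProd, List.prod_replicate]

/-- The subgroup `pA + [A,A]`. -/
def cycDivisible (p : ℕ) (A : Type*) [Ring A] : AddSubgroup A :=
  (nsmulAddMonoidHom p : A ⧸ commAdd A →+ A ⧸ commAdd A).range.comap (QuotientAddGroup.mk' _)

theorem mem_cycDivisible_iff {p : ℕ} {x : A} :
    x ∈ cycDivisible p A ↔ ∃ s : A, p • s - x ∈ commAdd A := by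
  refine ⟨fun ⟨c, hc⟩ => ?_, fun ⟨s, hs⟩ => ?_⟩
  · obtain ⟨s, rfl⟩ := QuotientAddGroup.mk_surjective c
    exact ⟨s, QuotientAddGroup.eq_iff_sub_mem.1 hc⟩
  · exact ⟨s, QuotientAddGroup.eq_iff_sub_mem.2 hs⟩

theorem mem_cycDivisible_of_mem_commAdd {p : ℕ} {x : A} (hx : x ∈ commAdd A) :
    x ∈ cycDivisible p A :=
  mem_cycDivisible_iff.2 ⟨0, by simpa using neg_mem hx⟩

theorem nsmul_mem_cycDivisible (p : ℕ) (s : A) : p • s ∈ cycDivisible p A :=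
  ⟨s, rfl⟩

theorem add_pow_sub_pow_sub_pow_mem_cycDivisible {p : ℕ} (hp : p.Prime) (a b : A) :
    (a + b) ^ p - a ^ p - b ^ p ∈ cycDivisible p A := by
  have := Fact.mk hp
  obtain ⟨m, rfl⟩ : ∃ m, p = m + 1 := ⟨p - 1, (Nat.sub_add_cancel hp.one_le).symm⟩
  obtain ⟨c, hc⟩ := Equiv.Perm.exists_sum_eq_sum_fixed_add_nsmul (σ := rotateWord (m + 1) Bool)
    (n := 1) (by rw [pow_one, rotateWord_pow_self])
    (fun w => ((wordProd a b w : A) : A ⧸ commAdd A))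
    (fun w => QuotientAddGroup.eq_iff_sub_mem.2 (wordProd_rotateWord_sub_mem_commAdd a b w))
  refine ⟨c, ?_⟩
  rw [QuotientAddGroup.mk'_apply, QuotientAddGroup.mk_sub, QuotientAddGroup.mk_sub,
    add_pow_eq_sum_wordProd, QuotientAddGroup.mk_sum, hc, filter_rotateWord_eq_self,
    sum_pair (by simp [funext_iff]), wordProd_const, wordProd_const, nsmulAddMonoidHom_apply]
  simp only [cond_true, cond_false]
  abel

theorem neg_pow_add_pow_mem_cycDivisible {p : ℕ} (hp : p.Prime) (a : A) :
    (-a) ^ p + a ^ p ∈ cycDivisible p A := by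
  rcases hp.eq_two_or_odd' with rfl | hodd
  · rw [neg_sq, ← two_nsmul]
    exact nsmul_mem_cycDivisible 2 _
  · rw [hodd.neg_pow, neg_add_cancel]
    exact zero_mem _

theorem pow_mem_cycDivisible {p : ℕ} (hp : p.Prime) {x : A} (hx : x ∈ cycDivisible p A) :
    x ^ p ∈ cycDivisible p A := by
  let S : AddSubgroup A :=
    { carrier := {t | t ^ p ∈ cycDivisible p A}
      zero_mem' := by simp [zero_pow hp.ne_zero]
      add_mem' := fun {a b} ha hb => by
        show (a + b) ^ p ∈ cycDivisible p A
        convert add_mem (add_mem (add_pow_sub_pow_sub_pow_mem_cycDivisible hp a b) ha) hb using 1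
        abel
      neg_mem' := fun {a} ha => by
        simpa using sub_mem (neg_pow_add_pow_mem_cycDivisible hp a) ha }
  have hcomm : commAdd A ≤ S := (AddSubgroup.closure_le S).2 <| by
    rintro _ ⟨a, b, rfl⟩
    have := add_mem (add_mem (add_pow_sub_pow_sub_pow_mem_cycDivisible hp (a * b) (-(b * a)))
      (mem_cycDivisible_of_mem_commAdd (mul_pow_sub_mul_pow_mem_commAdd a b p)))
      (neg_pow_add_pow_mem_cycDivisible hp (b * a))
    show (a * b - b * a) ^ p ∈ cycDivisible p A
    rw [sub_eq_add_neg]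
    convert this using 1
    abel
  have hnsmul (s : A) : p • s ∈ S := by
    show (p • s) ^ p ∈ cycDivisible p A
    convert nsmul_mem_cycDivisible p (p ^ (p - 1) • s ^ p) using 1
    rw [smul_pow, ← mul_nsmul', ← pow_succ', Nat.sub_add_cancel hp.one_le]
  obtain ⟨s, hs⟩ := mem_cycDivisible_iff.1 hx
  have hxS : x ∈ S := by simpa using sub_mem (hnsmul s) (hcomm hs)
  exact hxS

end Ring

theorem stmt_1_general (n : ℕ) (p : ℕ) (hp : p.Prime) (ℓ : ℕ) :
    ∃ s : P n, p • s - rEl n ^ p ^ ℓ ∈ commAdd (P n) := by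
  have hr : rEl n ∈ cycDivisible p (P n) :=
    mem_cycDivisible_of_mem_commAdd (sum_mem fun i _ => mul_sub_mul_mem_commAdd (Xg i) (Yg i))
  have hpow (m : ℕ) : rEl n ^ p ^ m ∈ cycDivisible p (P n) := by
    induction m with
    | zero => simpa using hr
    | succ m ih =>
      rw [pow_succ, pow_mul]
      exact pow_mem_cycDivisible hp ih
  exact mem_cycDivisible_iff.1 (hpow ℓ)

/-- For every prime `p` and `ℓ ≥ 1`, `r^{p^ℓ} ∈ pP + [P,P]`: there is `s ∈ P` with
`p·s − r^{p^ℓ} ∈ [P,P]`, so the class of `r^{p^ℓ}` in `P_cyc` is divisible by `p`. -/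
theorem stmt_1 (n : ℕ) (hn : 1 ≤ n) (p : ℕ) (hp : p.Prime) (ℓ : ℕ) (hℓ : 1 ≤ ℓ) :
    ∃ s : P n, p • s - rEl n ^ p ^ ℓ ∈ commAdd (P n) :=
  stmt_1_general n p hp ℓ
end
end

section
/- A is free as a ℤ-module, with basis the elements z_{a₁,b₁}·r'·z_{a₂,b₂}·r'·⋯·r'·z_{a_{m+1},b_{m+1}} over all integers m ≥ 0 and all nonnegative integers a₁,b₁,…,a_{m+1},b_{m+1} (for m = 0 this is the single factor z_{a₁,b₁}; in particular z_{0,0} = 1). -/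
noncomputable section

/-- `F = ℤ⟨x,y,r'⟩`, the free associative `ℤ`-algebra on three generators
(`x`, `y` of degree 1 and `r'` of degree 2). -/
abbrev F3 : Type := FreeAlgebra ℤ (Fin 3)

/-- The generator `x`. -/
def xF : F3 := FreeAlgebra.ι ℤ 0

/-- The generator `y`. -/
def yF : F3 := FreeAlgebra.ι ℤ 1

/-- The generator `r'`. -/
def rF : F3 := FreeAlgebra.ι ℤ 2

/-- The relation presenting `A := F/((xy − yx + r'))`. -/
def relA : F3 → F3 → Prop := fun a b => a = xF * yF - yF * xF + rF ∧ b = 0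

/-- `A := F/((xy − yx + r'))`. -/
abbrev Alg : Type := RingQuot relA

/-- The quotient map `F → A`. -/
def πA : F3 →+* Alg := RingQuot.mkRingHom relA

/-- The image of `x` in `A`. -/
def xA : Alg := πA xF

/-- The image of `y` in `A`. -/
def yA : Alg := πA yF

/-- The image of `r'` in `A`. -/
def rA : Alg := πA rF

/-- `z_{a,b} := (xy)^b x^{a−b}` if `a ≥ b`, and `(yx)^a y^{b−a}` if `a < b`. -/
def z (a b : ℕ) : Alg :=
  if b ≤ a then (xA * yA) ^ b * xA ^ (a - b) else (yA * xA) ^ a * yA ^ (b - a)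

/-
Rewriting `yx → xy + r'` shows that `A` is spanned by the normal words
`x^a₁ y^b₁ r' x^a₂ y^b₂ r' ⋯`. They are linearly independent because the rewriting rule also
defines an action of `A` on the free `ℤ`-module with these words as basis, under which
`normalWord i • e_∅ = e_i`. Modulo normal words of the same degree with more factors `r'`, the
generators `x` and `y` commute (their commutator is `r'`), so `z_{a,b} ≡ x^a y^b` and each
proposed basis element equals its normal word plus a combination of normal words with fewer
letters `x`, `y`: the change of basis is unitriangular.
-/

open Submodule

section Unitriangular

variable {R M ι : Type*} [Ring R] [AddCommGroup M] [Module R M]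
  (b : Module.Basis ι R M) {ρ : ι → ℕ} {v : ι → M}

theorem top_le_span_of_sub_mem_span_lt (hv : ∀ i, v i - b i ∈ span R (b '' {j | ρ j < ρ i})) :
    ⊤ ≤ span R (Set.range v) := by
  have key : ∀ n j, ρ j < n → b j ∈ span R (Set.range v) := by
    intro n
    induction n with
    | zero => intro j h; omega
    | succ n ih =>
      intro j hj
      have hlow : v j - b j ∈ span R (Set.range v) := by
        refine span_le.mpr ?_ (hv j)
        rintro _ ⟨k, hk, rfl⟩
        exact ih k (by simp only [Set.mem_ofPred_eq] at hk; omega)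
      simpa using sub_mem (subset_span (Set.mem_range_self j)) hlow
  rw [← b.span_eq]
  exact span_le.mpr (by rintro _ ⟨j, rfl⟩; exact key _ j (Nat.lt_succ_self _))

theorem repr_apply_of_sub_mem_span_lt (hv : ∀ i, v i - b i ∈ span R (b '' {j | ρ j < ρ i}))
    [DecidableEq ι] {i j : ι} (hij : ρ i ≤ ρ j) :
    b.repr (v i) j = if i = j then 1 else 0 := by
  have hlow : b.repr (v i - b i) j = 0 := by
    by_contra h
    have : ρ j < ρ i := b.mem_span_image.mp (hv i) (Finsupp.mem_support_iff.mpr h)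
    omega
  rw [← sub_add_cancel (v i) (b i), map_add, Finsupp.add_apply, hlow, b.repr_self,
    Finsupp.single_apply, zero_add]

theorem linearIndependent_of_sub_mem_span_lt
    (hv : ∀ i, v i - b i ∈ span R (b '' {j | ρ j < ρ i})) : LinearIndependent R v := by
  classical
  refine linearIndependent_iff.mpr fun l hl => ?_
  by_contra hne
  -- the coefficient of `b i₀` in `∑ l i • v i` is `l i₀` when `ρ i₀` is maximal on the support
  obtain ⟨i₀, hi₀, hmax⟩ := l.support.exists_max_image ρ (Finsupp.support_nonempty_iff.mpr hne)
  have hcoeff : b.repr (Finsupp.linearCombination R v l) i₀ = l i₀ := by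
    rw [Finsupp.linearCombination_apply, map_finsuppSum, Finsupp.sum_apply, Finsupp.sum,
      Finset.sum_eq_single i₀]
    · simp [repr_apply_of_sub_mem_span_lt b hv le_rfl]
    · intro i hi hne
      simp [repr_apply_of_sub_mem_span_lt b hv (hmax i hi), hne]
    · exact fun h => absurd hi₀ h
  rw [hl, map_zero, Finsupp.zero_apply] at hcoeff
  exact Finsupp.mem_support_iff.mp hi₀ hcoeff.symm

theorem exists_basis_of_sub_mem_span_lt (hv : ∀ i, v i - b i ∈ span R (b '' {j | ρ j < ρ i})) :
    ∃ B : Module.Basis ι R M, ⇑B = v :=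
  ⟨.mk (linearIndependent_of_sub_mem_span_lt b hv) (top_le_span_of_sub_mem_span_lt b hv),
    Module.Basis.coe_mk _ _⟩

end Unitriangular

section ChainProd

variable {α S : Type*} [Monoid S] (f : α → S) (r : S)

def chainProd (i : α × List α) : S :=
  f i.1 * (i.2.map fun q => r * f q).prod

@[simp]
theorem chainProd_nil (h : α) : chainProd f r (h, []) = f h := by
  simp [chainProd]

theorem chainProd_cons (h q : α) (t : List α) :
    chainProd f r (h, q :: t) = f h * (r * chainProd f r (q, t)) := by
  simp [chainProd, mul_assoc]

end ChainProd

namespace Alg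

theorem πA_apply (p : F3) : πA p = RingQuot.mkAlgHom ℤ relA p := by
  rw [πA, ← RingQuot.mkAlgHom_coe ℤ]
  rfl

theorem yA_mul_xA : yA * xA = xA * yA + rA := by
  have h : πA (xF * yF - yF * xF + rF) = πA 0 := RingQuot.mkRingHom_rel ⟨rfl, rfl⟩
  rw [map_add, map_sub, map_mul, map_mul, map_zero] at h
  change xA * yA - yA * xA + rA = 0 at h
  calc yA * xA = yA * xA + (xA * yA - yA * xA + rA) := by rw [h, add_zero]
    _ = xA * yA + rA := by abel

abbrev Index : Type := (ℕ × ℕ) × List (ℕ × ℕ)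

def shiftX (i : Index) : Index := ((i.1.1 + 1, i.1.2), i.2)

def consR (i : Index) : Index := ((0, 0), i.1 :: i.2)

theorem Index.induction {P : Index → Prop} (one : P ((0, 0), []))
    (shift : ∀ i, P i → P (shiftX i)) (y : ∀ b t, P ((0, b), t) → P ((0, b + 1), t))
    (cons : ∀ i, P i → P (consR i)) (i : Index) : P i := by
  obtain ⟨⟨a, b⟩, t⟩ := i
  induction t generalizing a b with
  | nil => ?_
  | cons q t ih => ?_
  all_goals
    induction a with
    | succ a iha => exact shift _ iha
    | zero =>
      induction b with
      | succ b ihb => exact y _ _ ihb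
      | zero => first | exact one | exact cons (q, t) (ih _ _)

/-- `((a₁, b₁), [(a₂, b₂), …])` ↦ `x^a₁ y^b₁ r' x^a₂ y^b₂ r' ⋯`: the words that are irreducible
for the rewriting rule `yx → xy + r'`. -/
def normalWord : Index → Alg := chainProd (fun p => xA ^ p.1 * yA ^ p.2) rA

theorem normalWord_one : normalWord ((0, 0), []) = 1 := by
  simp [normalWord]

theorem normalWord_shiftX (i : Index) : normalWord (shiftX i) = xA * normalWord i := by
  obtain ⟨h, _ | ⟨q, t⟩⟩ := i <;>
    simp [normalWord, shiftX, chainProd_cons, pow_succ', mul_assoc]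

theorem normalWord_consR (i : Index) : normalWord (consR i) = rA * normalWord i := by
  simp [normalWord, consR, chainProd_cons]

theorem normalWord_zero_succ (b : ℕ) (t : List (ℕ × ℕ)) :
    normalWord ((0, b + 1), t) = yA * normalWord ((0, b), t) := by
  cases t <;> simp [normalWord, chainProd_cons, pow_succ', mul_assoc]

theorem yA_mul_normalWord_shiftX (i : Index) :
    yA * normalWord (shiftX i) = xA * (yA * normalWord i) + normalWord (consR i) := by
  rw [normalWord_shiftX, normalWord_consR, ← mul_assoc, yA_mul_xA, add_mul, mul_assoc]

def numXY (i : Index) : ℕ := i.1.1 + i.1.2 + (i.2.map fun q => q.1 + q.2).sum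

/-- `r'` has degree 2, and `normalWord i` contains `i.2.length` factors `r'`. -/
def degree (i : Index) : ℕ := numXY i + 2 * i.2.length

@[simp]
theorem degree_shiftX (i : Index) : degree (shiftX i) = degree i + 1 := by
  simp only [degree, numXY, shiftX]; ring

@[simp]
theorem degree_consR (i : Index) : degree (consR i) = degree i + 2 := by
  simp only [degree, numXY, consR, List.map_cons, List.sum_cons, List.length_cons]; ring

def filt (d c : ℕ) : Submodule ℤ Alg :=
  span ℤ (normalWord '' {i | degree i = d ∧ c ≤ i.2.length})

theorem normalWord_mem_filt (i : Index) : normalWord i ∈ filt (degree i) i.2.length :=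
  subset_span ⟨i, ⟨rfl, le_rfl⟩, rfl⟩

theorem filt_antitone {d c c' : ℕ} (h : c ≤ c') : filt d c' ≤ filt d c :=
  span_mono (Set.image_mono fun _ hi => ⟨hi.1, h.trans hi.2⟩)

theorem mem_filt_of_eq_of_le {d d' c c' : ℕ} {m : Alg} (hm : m ∈ filt d c)
    (hd : d = d' := by omega) (hc : c' ≤ c := by omega) : m ∈ filt d' c' :=
  hd ▸ filt_antitone hc hm

theorem one_mem_filt : (1 : Alg) ∈ filt 0 0 :=
  normalWord_one ▸ normalWord_mem_filt ((0, 0), [])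

theorem mul_mem_filt_of_mul_normalWord_mem {s : Alg} {e k : ℕ}
    (hs : ∀ i, s * normalWord i ∈ filt (degree i + e) (i.2.length + k))
    {d c : ℕ} {m : Alg} (hm : m ∈ filt d c) : s * m ∈ filt (d + e) (c + k) := by
  induction hm using span_induction with
  | mem _ hx =>
    obtain ⟨i, ⟨rfl, hc⟩, rfl⟩ := hx
    exact filt_antitone (by omega) (hs i)
  | zero => simp
  | add _ _ _ _ hx hy => rw [mul_add]; exact add_mem hx hy
  | smul a _ _ hx => rw [mul_smul_comm]; exact smul_mem _ a hx

theorem xA_mul_mem_filt {d c : ℕ} {m : Alg} (hm : m ∈ filt d c) : xA * m ∈ filt (d + 1) c :=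
  mul_mem_filt_of_mul_normalWord_mem (k := 0) (fun i => by
    rw [← normalWord_shiftX, ← degree_shiftX]
    exact normalWord_mem_filt (shiftX i)) hm

theorem rA_mul_mem_filt {d c : ℕ} {m : Alg} (hm : m ∈ filt d c) :
    rA * m ∈ filt (d + 2) (c + 1) :=
  mul_mem_filt_of_mul_normalWord_mem (fun i => by
    rw [← normalWord_consR, ← degree_consR]
    exact normalWord_mem_filt (consR i)) hm

theorem yA_mul_normalWord_mem_filt (i : Index) :
    yA * normalWord i ∈ filt (degree i + 1) i.2.length := by
  obtain ⟨⟨a, b⟩, t⟩ := i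
  induction a with
  | zero =>
    simpa [normalWord_zero_succ, degree, numXY, add_right_comm] using
      normalWord_mem_filt ((0, b + 1), t)
  | succ a ih =>
    have h := yA_mul_normalWord_shiftX ((a, b), t)
    simp only [shiftX] at h
    rw [h]
    refine add_mem (mem_filt_of_eq_of_le (xA_mul_mem_filt ih) ?_ le_rfl)
      (mem_filt_of_eq_of_le (normalWord_mem_filt (consR ((a, b), t))) ?_ (by simp [consR]))
    all_goals simp [degree, numXY, consR]; ring

theorem yA_mul_mem_filt {d c : ℕ} {m : Alg} (hm : m ∈ filt d c) : yA * m ∈ filt (d + 1) c :=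
  mul_mem_filt_of_mul_normalWord_mem (k := 0) yA_mul_normalWord_mem_filt hm

theorem xA_mem_filt : xA ∈ filt 1 0 := by
  simpa using xA_mul_mem_filt one_mem_filt

theorem yA_mem_filt : yA ∈ filt 1 0 := by
  simpa using yA_mul_mem_filt one_mem_filt

theorem rA_mem_filt : rA ∈ filt 2 1 := by
  simpa using rA_mul_mem_filt one_mem_filt

theorem normalWord_mul_mem_filt {d c : ℕ} {m : Alg} (hm : m ∈ filt d c) (i : Index) :
    normalWord i * m ∈ filt (degree i + d) (i.2.length + c) := by
  induction i using Index.induction with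
  | one => simpa [normalWord_one, degree, numXY] using hm
  | shift i ih =>
    rw [normalWord_shiftX, mul_assoc]
    exact mem_filt_of_eq_of_le (xA_mul_mem_filt ih) (by simp; ring) le_rfl
  | y b t ih =>
    rw [normalWord_zero_succ, mul_assoc]
    exact mem_filt_of_eq_of_le (yA_mul_mem_filt ih) (by simp [degree, numXY]; ring) le_rfl
  | cons i ih =>
    rw [normalWord_consR, mul_assoc]
    exact mem_filt_of_eq_of_le (rA_mul_mem_filt ih) (by simp; ring) (by simp [consR]; omega)

theorem mul_mem_filt {d d' c c' : ℕ} {m m' : Alg} (hm : m ∈ filt d c) (hm' : m' ∈ filt d' c') :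
    m * m' ∈ filt (d + d') (c + c') := by
  induction hm using span_induction with
  | mem _ hx =>
    obtain ⟨i, ⟨rfl, hc⟩, rfl⟩ := hx
    exact filt_antitone (by omega) (normalWord_mul_mem_filt hm' i)
  | zero => simp
  | add _ _ _ _ hx hy => rw [add_mul]; exact add_mem hx hy
  | smul a _ _ hx => rw [smul_mul_assoc]; exact smul_mem _ a hx

theorem span_normalWord_eq_top : span ℤ (Set.range normalWord) = ⊤ := by
  have hfilt : ∀ {d c m}, m ∈ filt d c → m ∈ span ℤ (Set.range normalWord) := fun hm =>
    span_mono (Set.image_subset_range _ _) hm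
  have hmul : span ℤ (Set.range normalWord) * span ℤ (Set.range normalWord) ≤
      span ℤ (Set.range normalWord) := by
    erw [span_mul_span, span_le]
    rintro _ ⟨_, ⟨i, rfl⟩, _, ⟨j, rfl⟩, rfl⟩
    exact hfilt (mul_mem_filt (normalWord_mem_filt i) (normalWord_mem_filt j))
  rw [eq_top_iff]
  rintro a -
  obtain ⟨p, rfl⟩ := RingQuot.mkAlgHom_surjective ℤ relA a
  induction p using FreeAlgebra.induction with
  | grade0 r =>
    rw [AlgHom.commutes, Algebra.algebraMap_eq_smul_one]
    exact smul_mem _ r (hfilt one_mem_filt)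
  | grade1 j =>
    fin_cases j <;> simp only [← πA_apply]
    exacts [hfilt xA_mem_filt, hfilt yA_mem_filt, hfilt rA_mem_filt]
  | mul p q hp hq => rw [map_mul]; exact hmul (mul_mem_mul hp hq)
  | add p q hp hq => rw [map_add]; exact add_mem hp hq

open Finsupp in
/-- The left action of `y` on the would-be normal-form basis, following `y x = x y + r'`. -/
def yActSingle : ℕ → ℕ → List (ℕ × ℕ) → Index →₀ ℤ
  | 0, b, t => single ((0, b + 1), t) 1
  | a + 1, b, t => mapDomain shiftX (yActSingle a b t) + single (consR ((a, b), t)) 1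

def generatorAct : Fin 3 → Module.End ℤ (Index →₀ ℤ) :=
  ![Finsupp.lmapDomain ℤ ℤ shiftX,
    Finsupp.linearCombination ℤ fun i => yActSingle i.1.1 i.1.2 i.2,
    Finsupp.lmapDomain ℤ ℤ consR]

/-- The left regular representation of `A` on the free module over the normal words. -/
def regRep : Alg →ₐ[ℤ] Module.End ℤ (Index →₀ ℤ) :=
  RingQuot.liftAlgHom ℤ ⟨FreeAlgebra.lift ℤ generatorAct, by
    rintro _ _ ⟨rfl, rfl⟩
    simp only [xF, yF, rF, map_add, map_sub, map_mul, map_zero, FreeAlgebra.lift_ι_apply]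
    refine Finsupp.basisSingleOne.ext fun i => ?_
    simp [generatorAct, shiftX, yActSingle]⟩

theorem regRep_πA_ι (j : Fin 3) : regRep (πA (FreeAlgebra.ι ℤ j)) = generatorAct j := by
  rw [πA_apply, regRep, RingQuot.liftAlgHom_mkAlgHom_apply, FreeAlgebra.lift_ι_apply]

theorem regRep_normalWord (i : Index) :
    regRep (normalWord i) (Finsupp.single ((0, 0), []) 1) = Finsupp.single i 1 := by
  induction i using Index.induction with
  | one => simp [normalWord_one]
  | shift i ih => simp [normalWord_shiftX, ih, xA, xF, regRep_πA_ι, generatorAct]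
  | y b t ih => simp [normalWord_zero_succ, ih, yA, yF, regRep_πA_ι, generatorAct, yActSingle]
  | cons i ih => simp [normalWord_consR, ih, rA, rF, regRep_πA_ι, generatorAct]

theorem linearIndependent_normalWord : LinearIndependent ℤ normalWord :=
  .of_comp (LinearMap.applyₗ (Finsupp.single ((0, 0), []) 1) ∘ₗ regRep.toLinearMap) <| by
    convert Finsupp.linearIndependent_single_one ℤ Index using 1
    · exact funext regRep_normalWord
    · -- two instances of `Module ℤ (Index →₀ ℤ)`
      exact Subsingleton.elim _ _

theorem pow_mem_filt {d : ℕ} {m : Alg} (hm : m ∈ filt d 0) (n : ℕ) : m ^ n ∈ filt (n * d) 0 := by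
  induction n with
  | zero => simpa using one_mem_filt
  | succ n ih => rw [pow_succ]; exact mem_filt_of_eq_of_le (mul_mem_filt ih hm) (by ring)

theorem rA_eq : rA = yA * xA - xA * yA := by
  rw [yA_mul_xA]; abel

theorem yA_commutator_xA_pow_mem_filt (n : ℕ) : yA * xA ^ n - xA ^ n * yA ∈ filt (n + 1) 1 := by
  induction n with
  | zero => simp
  | succ n ih =>
    have h : yA * xA ^ (n + 1) - xA ^ (n + 1) * yA
        = (yA * xA ^ n - xA ^ n * yA) * xA + xA ^ n * rA := by
      rw [rA_eq]; simp only [sub_mul, mul_sub, pow_succ, mul_assoc]; abel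
    rw [h]
    exact add_mem (mem_filt_of_eq_of_le (mul_mem_filt ih xA_mem_filt))
      (mem_filt_of_eq_of_le (mul_mem_filt (pow_mem_filt xA_mem_filt n) rA_mem_filt))

theorem yA_pow_commutator_xA_pow_mem_filt (m n : ℕ) :
    yA ^ m * xA ^ n - xA ^ n * yA ^ m ∈ filt (m + n) 1 := by
  induction m with
  | zero => simp
  | succ m ih =>
    have h : yA ^ (m + 1) * xA ^ n - xA ^ n * yA ^ (m + 1)
        = yA * (yA ^ m * xA ^ n - xA ^ n * yA ^ m) + (yA * xA ^ n - xA ^ n * yA) * yA ^ m := by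
      simp only [sub_mul, mul_sub, pow_succ', mul_assoc]; abel
    rw [h]
    exact add_mem (mem_filt_of_eq_of_le (mul_mem_filt yA_mem_filt ih))
      (mem_filt_of_eq_of_le
        (mul_mem_filt (yA_commutator_xA_pow_mem_filt n) (pow_mem_filt yA_mem_filt m)))

theorem xA_mul_yA_pow_sub_mem_filt (n : ℕ) :
    (xA * yA) ^ n - xA ^ n * yA ^ n ∈ filt (2 * n) 1 := by
  induction n with
  | zero => simp
  | succ n ih =>
    have h : (xA * yA) ^ (n + 1) - xA ^ (n + 1) * yA ^ (n + 1)
        = xA * yA * ((xA * yA) ^ n - xA ^ n * yA ^ n)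
          + xA * (yA * xA ^ n - xA ^ n * yA) * yA ^ n := by
      simp only [sub_mul, mul_sub, pow_succ', mul_assoc]; abel
    rw [h]
    exact add_mem
      (mem_filt_of_eq_of_le (mul_mem_filt (mul_mem_filt xA_mem_filt yA_mem_filt) ih))
      (mem_filt_of_eq_of_le (mul_mem_filt (mul_mem_filt xA_mem_filt
        (yA_commutator_xA_pow_mem_filt n)) (pow_mem_filt yA_mem_filt n)))

theorem yA_mul_xA_pow_sub_mem_filt (n : ℕ) :
    (yA * xA) ^ n - xA ^ n * yA ^ n ∈ filt (2 * n) 1 := by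
  induction n with
  | zero => simp
  | succ n ih =>
    have h : (yA * xA) ^ (n + 1) - xA ^ (n + 1) * yA ^ (n + 1)
        = yA * xA * ((yA * xA) ^ n - xA ^ n * yA ^ n)
          + (yA * xA ^ (n + 1) - xA ^ (n + 1) * yA) * yA ^ n := by
      simp only [sub_mul, mul_sub, pow_succ', mul_assoc]; abel
    rw [h]
    exact add_mem
      (mem_filt_of_eq_of_le (mul_mem_filt (mul_mem_filt yA_mem_filt xA_mem_filt) ih))
      (mem_filt_of_eq_of_le (mul_mem_filt (yA_commutator_xA_pow_mem_filt (n + 1))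
        (pow_mem_filt yA_mem_filt n)))

theorem z_sub_mem_filt (a b : ℕ) : z a b - xA ^ a * yA ^ b ∈ filt (a + b) 1 := by
  unfold z
  split_ifs with hba
  · obtain ⟨k, rfl⟩ := Nat.exists_eq_add_of_le hba
    have h : (xA * yA) ^ b * xA ^ (b + k - b) - xA ^ (b + k) * yA ^ b
        = ((xA * yA) ^ b - xA ^ b * yA ^ b) * xA ^ k
          + xA ^ b * (yA ^ b * xA ^ k - xA ^ k * yA ^ b) := by
      rw [Nat.add_sub_cancel_left, pow_add]
      simp only [sub_mul, mul_sub, mul_assoc]; abel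
    rw [h]
    exact add_mem
      (mem_filt_of_eq_of_le (mul_mem_filt (xA_mul_yA_pow_sub_mem_filt b)
        (pow_mem_filt xA_mem_filt k)))
      (mem_filt_of_eq_of_le (mul_mem_filt (pow_mem_filt xA_mem_filt b)
        (yA_pow_commutator_xA_pow_mem_filt b k)))
  · obtain ⟨k, rfl⟩ := Nat.exists_eq_add_of_le (Nat.le_of_not_le hba)
    have h : (yA * xA) ^ a * yA ^ (a + k - a) - xA ^ a * yA ^ (a + k)
        = ((yA * xA) ^ a - xA ^ a * yA ^ a) * yA ^ k := by
      rw [Nat.add_sub_cancel_left, pow_add, sub_mul, mul_assoc]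
    rw [h]
    exact mem_filt_of_eq_of_le (mul_mem_filt (yA_mul_xA_pow_sub_mem_filt a)
      (pow_mem_filt yA_mem_filt k))

/-- `z_{a₁,b₁} r' z_{a₂,b₂} r' ⋯ r' z_{a_{m+1},b_{m+1}}`, indexed like `normalWord`. -/
def zChain : Index → Alg := chainProd (fun p => z p.1 p.2) rA

theorem zChain_sub_normalWord_mem_filt (i : Index) :
    zChain i - normalWord i ∈ filt (degree i) (i.2.length + 1) := by
  obtain ⟨h, t⟩ := i
  induction t generalizing h with
  | nil => simpa [zChain, normalWord, degree, numXY] using z_sub_mem_filt h.1 h.2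
  | cons q t ih =>
    have hz := z_sub_mem_filt h.1 h.2
    have hzq : zChain (q, t) ∈ filt (degree (q, t)) t.length := by
      simpa using add_mem (filt_antitone (Nat.le_succ _) (ih q)) (normalWord_mem_filt (q, t))
    have e : zChain (h, q :: t) - normalWord (h, q :: t)
        = (z h.1 h.2 - xA ^ h.1 * yA ^ h.2) * (rA * zChain (q, t))
          + xA ^ h.1 * yA ^ h.2 * (rA * (zChain (q, t) - normalWord (q, t))) := by
      simp only [zChain, normalWord, chainProd_cons, sub_mul, mul_sub, mul_assoc]; abel
    rw [e]
    refine add_mem (mem_filt_of_eq_of_le (mul_mem_filt hz (mul_mem_filt rA_mem_filt hzq)) ?_ ?_)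
      (mem_filt_of_eq_of_le (mul_mem_filt (mul_mem_filt (pow_mem_filt xA_mem_filt _)
        (pow_mem_filt yA_mem_filt _)) (mul_mem_filt rA_mem_filt (ih q))) ?_ ?_)
    all_goals simp [degree, numXY] <;> omega

/-- At fixed degree, more factors `r'` means fewer letters `x`, `y`. -/
theorem zChain_sub_normalWord_mem_span (i : Index) :
    zChain i - normalWord i ∈ span ℤ (normalWord '' {j | numXY j < numXY i}) := by
  refine span_mono (Set.image_mono ?_) (zChain_sub_normalWord_mem_filt i)
  rintro j ⟨hd, hc⟩
  simp only [degree] at hd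
  simp only [Set.mem_ofPred_eq]
  omega

end Alg

/-- `A` is a free `ℤ`-module with basis the elements
`z_{a₁,b₁}·r'·z_{a₂,b₂}·r'·⋯·r'·z_{a_{m+1},b_{m+1}}`, indexed by a first pair `(a₁,b₁)`
together with the list of remaining pairs. -/
theorem stmt_5 :
    ∃ B : Module.Basis ((ℕ × ℕ) × List (ℕ × ℕ)) ℤ Alg,
      ∀ (h : ℕ × ℕ) (t : List (ℕ × ℕ)),
        B (h, t) = z h.1 h.2 * (t.map fun q => rA * z q.1 q.2).prod := by
  let normalBasis :=
    Module.Basis.mk Alg.linearIndependent_normalWord Alg.span_normalWord_eq_top.ge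
  have hv : ∀ i, Alg.zChain i - normalBasis i ∈
      span ℤ (normalBasis '' {j | Alg.numXY j < Alg.numXY i}) := by
    simpa [normalBasis] using Alg.zChain_sub_normalWord_mem_span
  obtain ⟨B, hB⟩ := exists_basis_of_sub_mem_span_lt normalBasis hv
  exact ⟨B, fun h t => congrFun hB (h, t)⟩
end
end

section
/- For all integers a, b ≥ 1, the identity a·[z_{a−1,b}·x − x·z_{a−1,b}] + b·[z_{a,b−1}·y − y·z_{a,b−1}] = 0 holds in V. -/
noncomputable section

/-- The two-sided ideal `Ar'A` of `A` generated by `r'`, as an additive subgroup. -/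
def idealR : AddSubgroup Alg := AddSubgroup.closure {x | ∃ a b : Alg, x = a * rA * b}

/-- The additive subgroup `[Ar'A, A]` of `A`. -/
def commIdealR : AddSubgroup Alg :=
  AddSubgroup.closure {x | ∃ u v : Alg, u ∈ idealR ∧ x = u * v - v * u}

/-- `V := A/[Ar'A, A]`. -/
abbrev V : Type := Alg ⧸ commIdealR

/-- The quotient map `A → V`. -/
def mkV : Alg →+ V := QuotientAddGroup.mk' _

/-! Since `A/Ar'A` is commutative, `p ↦ [p g − g p]` vanishes on `Ar'A`, so it only depends on
the commutative monomial underlying `p`. The telescoping identity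
`∑_{j<a} (x^{a−1−j} y^b x^j · x − x · x^{a−1−j} y^b x^j) = y^b x^a − x^a y^b`
therefore gives `a·[z_{a−1,b} x − x z_{a−1,b}] = [y^b x^a − x^a y^b]`, and symmetrically
`b·[z_{a,b−1} y − y z_{a,b−1}] = [x^a y^b − y^b x^a]`; the two cancel. -/

lemma sum_range_commutator_eq_mul_pow_sub_pow_mul {R : Type*} [Ring R] (u v : R) (n : ℕ) :
    ∑ j ∈ Finset.range n, (u ^ (n - 1 - j) * v * u ^ j * u - u * (u ^ (n - 1 - j) * v * u ^ j))
      = v * u ^ n - u ^ n * v := by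
  rw [Finset.sum_congr rfl fun j hj => ?_, Finset.sum_range_sub fun j => u ^ (n - j) * v * u ^ j]
  · simp
  obtain ⟨k, rfl⟩ : ∃ k, n = j + 1 + k := ⟨n - (j + 1), by have := Finset.mem_range.mp hj; omega⟩
  rw [show j + 1 + k - 1 - j = k by omega, show j + 1 + k - (j + 1) = k by omega,
    show j + 1 + k - j = k + 1 by omega, pow_succ, pow_succ']
  simp only [mul_assoc]

abbrev twoSidedIdealR : TwoSidedIdeal Alg := TwoSidedIdeal.span {rA}

open scoped Pointwise in
lemma mem_idealR_iff_mem_twoSidedIdealR {g : Alg} : g ∈ idealR ↔ g ∈ twoSidedIdealR := by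
  rw [TwoSidedIdeal.mem_span_iff_mem_addSubgroup_closure, idealR]
  congr! 2
  ext w
  simp [Set.mem_mul, eq_comm]

abbrev mkR : Alg →+* twoSidedIdealR.ringCon.Quotient := twoSidedIdealR.ringCon.mk'

lemma mkR_eq_mkR_iff {p q : Alg} : mkR p = mkR q ↔ p - q ∈ idealR := by
  rw [mem_idealR_iff_mem_twoSidedIdealR, ← TwoSidedIdeal.rel_iff]
  exact RingCon.eq _

lemma xA_mul_yA_sub_yA_mul_xA : xA * yA - yA * xA = -rA :=
  eq_neg_of_add_eq_zero_left <| by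
    simpa [πA, xA, yA, rA] using RingQuot.mkRingHom_rel (r := relA) ⟨rfl, rfl⟩

lemma commute_mkR_xA_yA : Commute (mkR xA) (mkR yA) := by
  rw [Commute, SemiconjBy, ← map_mul, ← map_mul, mkR_eq_mkR_iff, xA_mul_yA_sub_yA_mul_xA]
  exact neg_mem (AddSubgroup.subset_closure ⟨1, 1, by simp⟩)

lemma mkR_z (a b : ℕ) : mkR (z a b) = mkR xA ^ a * mkR yA ^ b := by
  have h := commute_mkR_xA_yA
  unfold z
  split_ifs with hba
  · rw [map_mul, map_pow, map_pow, map_mul, h.mul_pow, mul_assoc,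
      ← (h.pow_pow (a - b) b).eq, ← mul_assoc, ← pow_add, Nat.add_sub_cancel' hba]
  · rw [map_mul, map_pow, map_pow, map_mul, h.symm.mul_pow, (h.symm.pow_pow a a).eq, mul_assoc,
      ← pow_add, Nat.add_sub_cancel' (by omega)]

lemma mkV_mul_sub_mul_eq_zero {u : Alg} (hu : u ∈ idealR) (v : Alg) : mkV (u * v - v * u) = 0 :=
  (QuotientAddGroup.eq_zero_iff _).mpr (AddSubgroup.subset_closure ⟨u, v, hu, rfl⟩)

lemma mkV_mul_sub_mul_eq_of_mkR_eq {p q : Alg} (h : mkR p = mkR q) (g : Alg) :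
    mkV (p * g - g * p) = mkV (q * g - g * q) := by
  rw [← sub_eq_zero, ← map_sub,
    show p * g - g * p - (q * g - g * q) = (p - q) * g - g * (p - q) by
      simp only [sub_mul, mul_sub]; abel]
  exact mkV_mul_sub_mul_eq_zero (mkR_eq_mkR_iff.mp h) g

lemma nsmul_mkV_mul_sub_mul_eq (u v c : Alg) (n : ℕ)
    (hc : ∀ i j, i + j + 1 = n → mkR (u ^ i * v * u ^ j) = mkR c) :
    n • mkV (c * u - u * c) = mkV (v * u ^ n - u ^ n * v) := by
  rw [← sum_range_commutator_eq_mul_pow_sub_pow_mul, map_sum,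
    Finset.sum_congr rfl fun j hj => mkV_mul_sub_mul_eq_of_mkR_eq (hc _ _ ?_) u]
  · rw [Finset.sum_const, Finset.card_range]
  · have := Finset.mem_range.mp hj; omega

theorem stmt_7_general (a b : ℕ) :
    a • mkV (z (a - 1) b * xA - xA * z (a - 1) b)
      + b • mkV (z a (b - 1) * yA - yA * z a (b - 1)) = 0 := by
  have hxy := commute_mkR_xA_yA
  have hx : a • mkV (z (a - 1) b * xA - xA * z (a - 1) b)
      = mkV (yA ^ b * xA ^ a - xA ^ a * yA ^ b) :=
    nsmul_mkV_mul_sub_mul_eq _ _ _ _ fun i j hij => by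
      rw [mkR_z, map_mul, map_mul, map_pow, map_pow, map_pow, mul_assoc,
        ← (hxy.pow_pow j b).eq, ← mul_assoc, ← pow_add, show i + j = a - 1 by omega]
  have hy : b • mkV (z a (b - 1) * yA - yA * z a (b - 1))
      = mkV (xA ^ a * yA ^ b - yA ^ b * xA ^ a) :=
    nsmul_mkV_mul_sub_mul_eq _ _ _ _ fun i j hij => by
      rw [mkR_z, map_mul, map_mul, map_pow, map_pow, map_pow, ← (hxy.pow_pow _ _).eq, mul_assoc,
        ← pow_add, show i + j = b - 1 by omega]
  rw [hx, hy, ← map_add, sub_add_sub_cancel', sub_self, map_zero]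

/-- For all `a, b ≥ 1`, the identity
`a·[z_{a−1,b}x − x·z_{a−1,b}] + b·[z_{a,b−1}y − y·z_{a,b−1}] = 0` holds in `V`. -/
theorem stmt_7 (a b : ℕ) (ha : 1 ≤ a) (hb : 1 ≤ b) :
    a • mkV (z (a - 1) b * xA - xA * z (a - 1) b)
      + b • mkV (z a (b - 1) * yA - yA * z a (b - 1)) = 0 :=
  stmt_7_general a b
end
end

section
/- Let S = (w_j)_{j∈J} be a confluent family in V and let W ⊆ V be the k-linear span of S. For each i ∈ I choose a subset R_i ⊆ k containing 0 that maps bijectively onto the quotient k/Y_i. Then every class of V/W has a unique representative of the form ∑_{i∈I} μ_i v_i with μ_i ∈ R_i for all i and all but finitely many μ_i equal to 0; that is, the assignment sending a finitely-supported family (μ_i)_{i∈I} with μ_i ∈ R_i to the class of ∑_i μ_i v_i is a bijection onto V/W. -/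
/-!
Both halves are rewriting arguments that terminate by well-foundedness of the
Dershowitz–Manna order on finite multisets over `I`.  Existence: a coefficient `μ_i ∉ R_i` is
replaced by its representative `ρ ∈ R_i`, subtracting an element of `W` supported on `≤ i`
whose `i`-th coefficient is `μ_i - ρ ∈ Y_i`; this only creates new bad indices below `i`.
Uniqueness rests on the fact that a member of `W` supported on a lower set `D` is a
combination of those `w_j` with `ψ j ∈ D`: in a representation, the part with maximal leading
index `i ∉ D` is supported below `i`, so confluence rewrites it in terms of `w_j` with
`ψ j < i`.  Taking `D` the complement of `(i, ∞)` for `i` maximal in the support of a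
difference of two representatives puts its `i`-th coefficient in `Y_i`.
-/

open Submodule Finsupp

theorem Finsupp.linearCombination_apply_eq_zero {k I J : Type*} [Semiring k] {S : J → I →₀ k}
    {c : J →₀ k} {ℓ : I} (h : ∀ j ∈ c.support, S j ℓ = 0) : linearCombination k S c ℓ = 0 := by
  rw [linearCombination_apply, Finsupp.sum_apply]
  exact Finset.sum_eq_zero fun j hj => by simp [h j hj]

theorem Finset.isDershowitzMannaLT_val {I : Type*} [PartialOrder I] [DecidableEq I]
    {s t : Finset I} {a : I} (ha : a ∈ s) (h : ∀ ℓ ∈ t, ℓ < a ∨ ℓ ∈ s.erase a) :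
    Multiset.IsDershowitzMannaLT t.val s.val := by
  have hsplit : ∀ u v : Finset I, u.val = (u.filter (· ∈ v)).val + (u.filter (· ∉ v)).val :=
    fun u v => (Multiset.filter_add_not _ u.val).symm
  have hcommon : t.filter (· ∈ s) = s.filter (· ∈ t) := by ext; simp [and_comm]
  refine ⟨(t.filter (· ∈ s)).val, (t.filter (· ∉ s)).val, (s.filter (· ∉ t)).val,
    ?_, hsplit t s, hcommon ▸ hsplit s t, ?_⟩
  · have hat : a ∉ t := fun hat => by simpa using h a hat
    rw [Multiset.empty_eq_zero, Ne, Multiset.eq_zero_iff_forall_notMem, not_forall]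
    exact ⟨a, by simp [ha, hat]⟩
  · intro y hy
    simp only [Finset.filter_val, Multiset.mem_filter, Finset.mem_val] at hy
    exact ⟨a, by simpa using ⟨ha, fun hat => by simpa using h a hat⟩,
      (h y hy.1).resolve_right fun h' => hy.2 (Finset.mem_of_mem_erase h')⟩

theorem exists_eq_empty_of_forall_replace_maximal {I X : Type*} [PartialOrder I] [WellFoundedLT I]
    [DecidableEq I] (bad : X → Finset I)
    (step : ∀ x, ∀ i ∈ bad x, (∀ ℓ ∈ bad x, ¬ i < ℓ) →
      ∃ x', ∀ ℓ ∈ bad x', ℓ < i ∨ ℓ ∈ (bad x).erase i)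
    (x₀ : X) : ∃ x, bad x = ∅ := by
  induction x₀ using (InvImage.wf (fun x => (bad x).val)
    Multiset.wellFounded_isDershowitzMannaLT).induction with
  | _ x ih =>
    obtain hx | hx := (bad x).eq_empty_or_nonempty
    · exact ⟨x, hx⟩
    obtain ⟨i, hi, himax⟩ := (bad x).exists_maximal hx
    obtain ⟨x', hx'⟩ := step x i hi fun ℓ hℓ hiℓ => (himax hℓ hiℓ.le).not_gt hiℓ
    exact ih x' (Finset.isDershowitzMannaLT_val hi hx')

namespace DiamondLemma

variable {k I J : Type*} [Ring k] [PartialOrder I] {S : J → I →₀ k} {ψ : J → I}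

/-- The ideal `Y_i`. -/
def leadIdeal (S : J → I →₀ k) (ψ : J → I) (i : I) : Ideal k :=
  Ideal.span {c | ∃ j, ψ j = i ∧ c = S j i}

theorem linearCombination_filter_mem_supported_Iio [DecidableEq I]
    (hbound : ∀ j i, S j i ≠ 0 → i ≤ ψ j)
    {D : Set I} (hD : IsLowerSet D) {c : J →₀ k} (hcD : linearCombination k S c ∈ supported k k D)
    {i : I} (hiD : i ∉ D) (himax : ∀ j ∈ c.support, ψ j ∉ D → ¬ i < ψ j) :
    linearCombination k S (c.filter (ψ · = i)) ∈ supported k k (Set.Iio i) := by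
  have hle : ∀ ℓ, ¬ ℓ ≤ i → linearCombination k S (c.filter (ψ · = i)) ℓ = 0 :=
    fun ℓ hℓ => linearCombination_apply_eq_zero fun j hj =>
      by_contra fun h => hℓ ((Finset.mem_filter.1 hj).2 ▸ hbound j ℓ h)
  have hrest : linearCombination k S (c.filter (ψ · ≠ i)) i = 0 := by
    refine linearCombination_apply_eq_zero fun j hj => by_contra fun h => ?_
    obtain ⟨hjc, hji⟩ := Finset.mem_filter.1 hj
    have hiψ := hbound j i h
    by_cases hψD : ψ j ∈ D
    · exact hiD (hD hiψ hψD)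
    · exact hji ((hiψ.lt_or_eq.resolve_left (himax j hjc hψD)).symm)
  have hi : linearCombination k S (c.filter (ψ · = i)) i = 0 := by
    have hc : linearCombination k S c i = 0 := (mem_supported' k _).1 hcD i hiD
    rwa [← filter_add_filter_not c (ψ · = i), map_add, Finsupp.add_apply, hrest, add_zero] at hc
  refine (mem_supported' k _).2 fun ℓ hℓ => ?_
  by_cases hℓi : ℓ = i
  · exact hℓi ▸ hi
  · exact hle ℓ fun h => hℓ (h.lt_of_ne hℓi)

theorem exists_mem_span_apply_eq_of_mem_leadIdeal
    (hbound : ∀ j i, S j i ≠ 0 → i ≤ ψ j) {i : I} {c : k} (hc : c ∈ leadIdeal S ψ i) :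
    ∃ t ∈ span k (Set.range S) ⊓ supported k k (Set.Iic i), t i = c := by
  induction hc using Submodule.span_induction with
  | mem c hc =>
    obtain ⟨j, rfl, rfl⟩ := hc
    refine ⟨S j, ⟨subset_span ⟨j, rfl⟩, ?_⟩, rfl⟩
    exact (mem_supported' k _).2 fun ℓ hℓ => by_contra fun h => hℓ (hbound j ℓ h)
  | zero => exact ⟨0, zero_mem _, rfl⟩
  | add a b _ _ ha hb =>
    obtain ⟨t, ht, rfl⟩ := ha
    obtain ⟨t', ht', rfl⟩ := hb
    exact ⟨t + t', add_mem ht ht', rfl⟩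
  | smul a b _ hb =>
    obtain ⟨t, ht, rfl⟩ := hb
    exact ⟨a • t, smul_mem _ a ht, rfl⟩

theorem apply_mem_leadIdeal_of_mem_span_image (hbound : ∀ j i, S j i ≠ 0 → i ≤ ψ j) {i : I}
    {w : I →₀ k} (hw : w ∈ span k (S '' (ψ ⁻¹' (Set.Ioi i)ᶜ))) : w i ∈ leadIdeal S ψ i := by
  induction hw using Submodule.span_induction with
  | mem w hw =>
    obtain ⟨j, hj, rfl⟩ := hw
    by_cases hji : S j i = 0
    · exact hji ▸ zero_mem _
    have hψ : ψ j = i := ((hbound j i hji).lt_or_eq.resolve_left hj).symm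
    exact Ideal.subset_span ⟨j, hψ, rfl⟩
  | zero => exact zero_mem _
  | add a b _ _ ha hb => exact add_mem ha hb
  | smul a b _ hb => exact Ideal.mul_mem_left _ a hb

theorem mem_span_image_preimage_of_isLowerSet [WellFoundedLT I]
    (hbound : ∀ j i, S j i ≠ 0 → i ≤ ψ j)
    (hconf : ∀ i : I, span k (S '' {j | ψ j = i}) ⊓ supported k k {ℓ | ℓ < i}
        ≤ span k (S '' {j | ψ j < i}))
    {D : Set I} (hD : IsLowerSet D) {w : I →₀ k} (hw : w ∈ span k (Set.range S))
    (hwD : w ∈ supported k k D) : w ∈ span k (S '' (ψ ⁻¹' D)) := by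
  classical
  rw [← range_linearCombination] at hw
  obtain ⟨c₀, rfl⟩ := hw
  let bad : {c : J →₀ k // linearCombination k S c = linearCombination k S c₀} → Finset I :=
    fun c => (c.1.support.filter (ψ · ∉ D)).image ψ
  suffices ∃ c, bad c = ∅ by
    obtain ⟨⟨c, hc⟩, hcbad⟩ := this
    refine hc ▸ (mem_span_image_iff_linearCombination k).2 ⟨c, (mem_supported' k c).2 ?_, rfl⟩
    intro j hj
    by_contra hcj
    have : ψ j ∈ bad ⟨c, hc⟩ := by simpa [bad] using ⟨j, ⟨hcj, hj⟩, rfl⟩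
    simp [hcbad] at this
  refine exists_eq_empty_of_forall_replace_maximal bad ?_ ⟨c₀, rfl⟩
  rintro ⟨c, hc⟩ _ hi himax
  obtain ⟨j₀, ⟨hj₀c, hj₀D⟩, rfl⟩ := by simpa [bad] using hi
  have hu : linearCombination k S (c.filter (ψ · = ψ j₀)) ∈
      span k (S '' {j | ψ j = ψ j₀}) ⊓ supported k k {ℓ | ℓ < ψ j₀} := by
    refine ⟨(mem_span_image_iff_linearCombination k).2 ⟨_, ?_, rfl⟩, ?_⟩
    · exact (mem_supported k _).2 fun j hj => (Finset.mem_filter.1 hj).2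
    · refine linearCombination_filter_mem_supported_Iio hbound hD (hc ▸ hwD) hj₀D fun j hj hjD => ?_
      exact himax _ (by simpa [bad] using ⟨j, ⟨mem_support_iff.1 hj, hjD⟩, rfl⟩)
  obtain ⟨c', hc'supp, hc'⟩ := (mem_span_image_iff_linearCombination k).1 (hconf _ hu)
  refine ⟨⟨c.filter (ψ · ≠ ψ j₀) + c', ?_⟩, fun ℓ hℓ => ?_⟩
  · rw [map_add, hc', ← map_add, add_comm, filter_add_filter_not, hc]
  obtain ⟨j, ⟨hjc, hjD⟩, rfl⟩ := by simpa [bad] using hℓ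
  by_cases hc'j : c' j = 0
  · by_cases hψ : ψ j = ψ j₀
    · simp [hc'j, hψ] at hjc
    · rw [hc'j, add_zero, filter_apply_pos (p := fun x => ψ x ≠ ψ j₀) _ hψ] at hjc
      exact .inr (by simpa [bad] using ⟨hψ, j, ⟨hjc, hjD⟩, rfl⟩)
  · exact .inl (by_contra fun h => hc'j ((mem_supported' k c').1 hc'supp j h))

theorem exists_forall_mem_sub_mem_span [WellFoundedLT I] (hbound : ∀ j i, S j i ≠ 0 → i ≤ ψ j)
    {R : I → Set k} (hR0 : ∀ i, (0 : k) ∈ R i) (hR : ∀ i c, ∃ ρ ∈ R i, c - ρ ∈ leadIdeal S ψ i)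
    (v : I →₀ k) : ∃ μ : I →₀ k, (∀ i, μ i ∈ R i) ∧ v - μ ∈ span k (Set.range S) := by
  classical
  let bad : {μ : I →₀ k // v - μ ∈ span k (Set.range S)} → Finset I :=
    fun μ => μ.1.support.filter fun i => μ.1 i ∉ R i
  suffices ∃ μ, bad μ = ∅ by
    obtain ⟨⟨μ, hμ⟩, hbad⟩ := this
    refine ⟨μ, fun i => by_contra fun hi => ?_, hμ⟩
    have : i ∈ bad ⟨μ, hμ⟩ :=
      Finset.mem_filter.2 ⟨mem_support_iff.2 fun h => hi (h ▸ hR0 i), hi⟩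
    simp [hbad] at this
  refine exists_eq_empty_of_forall_replace_maximal bad (fun ⟨μ, hμ⟩ i hi _ => ?_) ⟨v, by simp⟩
  obtain ⟨ρ, hρR, hρ⟩ := hR i (μ i)
  obtain ⟨t, ⟨htW, htle⟩, hti⟩ := exists_mem_span_apply_eq_of_mem_leadIdeal hbound hρ
  refine ⟨⟨μ - t, by simpa [sub_sub_eq_add_sub, add_sub_right_comm] using add_mem hμ htW⟩,
    fun ℓ hℓ => ?_⟩
  obtain ⟨hℓμ, hℓR⟩ := Finset.mem_filter.1 hℓ
  rw [mem_support_iff] at hℓμ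
  by_cases hℓi : ℓ ≤ i
  · refine .inl (hℓi.lt_of_ne fun h => hℓR ?_)
    subst h
    simpa [hti] using hρR
  · have htℓ : t ℓ = 0 := (mem_supported' k t).1 htle ℓ hℓi
    rw [Finsupp.sub_apply, htℓ, sub_zero] at hℓμ hℓR
    exact .inr (Finset.mem_erase.2 ⟨fun h => hℓi h.le, by simpa [bad] using ⟨hℓμ, hℓR⟩⟩)

theorem eq_of_sub_mem_span [WellFoundedLT I] (hbound : ∀ j i, S j i ≠ 0 → i ≤ ψ j)
    (hconf : ∀ i : I, span k (S '' {j | ψ j = i}) ⊓ supported k k {ℓ | ℓ < i}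
        ≤ span k (S '' {j | ψ j < i}))
    {R : I → Set k} (hR : ∀ i, ∀ a ∈ R i, ∀ b ∈ R i, a - b ∈ leadIdeal S ψ i → a = b)
    {μ μ' : I →₀ k} (hμ : ∀ i, μ i ∈ R i) (hμ' : ∀ i, μ' i ∈ R i)
    (h : μ - μ' ∈ span k (Set.range S)) : μ = μ' := by
  classical
  by_contra hne
  obtain ⟨i, hi, himax⟩ :=
    (μ - μ').support.exists_maximal (support_nonempty_iff.2 (sub_ne_zero.2 hne))
  have hsupp : μ - μ' ∈ supported k k (Set.Ioi i)ᶜ := (mem_supported k _).2 fun ℓ hℓ hiℓ =>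
    (himax hℓ hiℓ.le).not_gt hiℓ
  have hlead := apply_mem_leadIdeal_of_mem_span_image hbound
    (mem_span_image_preimage_of_isLowerSet hbound hconf (isUpperSet_Ioi i).compl h hsupp)
  exact mem_support_iff.1 hi (sub_eq_zero.2 (hR i _ (hμ i) _ (hμ' i) (by simpa using hlead)))

end DiamondLemma

theorem stmt_11_general (k : Type*) [CommRing k] (I : Type*) [PartialOrder I]
    (hdcc : WellFoundedLT I)
    (J : Type*) (S : J → (I →₀ k)) (ψ : J → I)
    (hbound : ∀ (j : J) (i : I), S j i ≠ 0 → i ≤ ψ j)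
    (hconf : ∀ i : I,
      Submodule.span k (S '' {j | ψ j = i}) ⊓ Finsupp.supported k k {ℓ | ℓ < i}
        ≤ Submodule.span k (S '' {j | ψ j < i}))
    (R : I → Set k) (hR0 : ∀ i, (0 : k) ∈ R i)
    (hRrep : ∀ (i : I) (c : k), ∃! ρ : k, ρ ∈ R i ∧
      c - ρ ∈ Ideal.span {c' | ∃ j : J, ψ j = i ∧ c' = S j i}) :
    Function.Bijective
      (fun μ : {μ : I →₀ k // ∀ i, μ i ∈ R i} =>
        (Submodule.Quotient.mk (μ : I →₀ k) :
          (I →₀ k) ⧸ Submodule.span k (Set.range S))) := by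
  refine ⟨fun μ μ' h => Subtype.ext ?_, fun q => ?_⟩
  · have hR : ∀ i, ∀ a ∈ R i, ∀ b ∈ R i, a - b ∈ DiamondLemma.leadIdeal S ψ i → a = b :=
      fun i a ha b hb hab => (hRrep i a).unique ⟨ha, by simp⟩ ⟨hb, hab⟩
    exact DiamondLemma.eq_of_sub_mem_span hbound hconf hR μ.2 μ'.2 ((Submodule.Quotient.eq _).1 h)
  · obtain ⟨v, rfl⟩ := Submodule.Quotient.mk_surjective _ q
    obtain ⟨μ, hμR, hμ⟩ :=
      DiamondLemma.exists_forall_mem_sub_mem_span hbound hR0 (fun i c => (hRrep i c).exists) v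
    exact ⟨⟨μ, hμR⟩, (Submodule.Quotient.eq _).2 (by simpa using neg_mem hμ)⟩

/-- **Diamond Lemma I.** Let `k` be a commutative ring and `V = I →₀ k` the free
`k`-module with basis `(v_i)`, where `I` is partially ordered with the descending chain
condition. Let `S = (w_j)` be a family of elements each defining a reduction (with
leading index `ψ j`), which is confluent, and let `W` be the `k`-span of `S`. Choose,
for each `i`, a set `R i ⊆ k` containing `0` mapping bijectively onto `k/Y_i`, where
`Y_i` is the ideal generated by the leading coefficients of members of `S` with leading
index `i`. Then every class of `V/W` has a unique representative `∑ μ_i v_i` with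
`μ_i ∈ R i` for all `i` (all but finitely many zero). -/
theorem stmt_11 (k : Type*) [CommRing k] (I : Type*) [PartialOrder I]
    (hdcc : WellFoundedLT I)
    (J : Type*) (S : J → (I →₀ k)) (ψ : J → I)
    (hlead : ∀ j : J, S j (ψ j) ≠ 0)
    (hbound : ∀ (j : J) (i : I), S j i ≠ 0 → i ≤ ψ j)
    (hconf : ∀ i : I,
      Submodule.span k (S '' {j | ψ j = i}) ⊓ Finsupp.supported k k {ℓ | ℓ < i}
        ≤ Submodule.span k (S '' {j | ψ j < i}))
    (R : I → Set k) (hR0 : ∀ i, (0 : k) ∈ R i)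
    (hRrep : ∀ (i : I) (c : k), ∃! ρ : k, ρ ∈ R i ∧
      c - ρ ∈ Ideal.span {c' | ∃ j : J, ψ j = i ∧ c' = S j i}) :
    Function.Bijective
      (fun μ : {μ : I →₀ k // ∀ i, μ i ∈ R i} =>
        (Submodule.Quotient.mk (μ : I →₀ k) :
          (I →₀ k) ⧸ Submodule.span k (Set.range S))) :=
  stmt_11_general k I hdcc J S ψ hbound hconf R hR0 hRrep
end

section
/- Let n ≥ 4 be an integer and A := ℤ⟨x,y,z⟩/((x + y + z, x², y², z^{n−2})). Then for every integer m ≥ 1, the degree-m component Λ_m is zero unless m is divisible by 4 and m ≤ 2(n−2); and for each m with 4 ∣ m and 4 ≤ m ≤ 2(n−2), Λ_m is a cyclic group of order 2, generated by the class of (xy)^{m/4}. -/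
/-!
Since `z = -(x + y)` and `x² = y² = 0`, every monomial of degree `2ℓ` is an integer combination of
the two alternating words of length `ℓ` in `x` and `y`, whose sum is `(x + y)ˡ`. Modulo commutators
a word may be rotated cyclically: an odd alternating word rotates into a word containing `x²` or
`y²`, and `(yx)ʲ` rotates into `(xy)ʲ`. So `Λ_{4j}` is generated by the class of `(xy)ʲ` and the
other components vanish. Writing `N = n - 2`, `(xy)ʲ = x (x + y)^{2j-1}` is zero once `2j > N`
because `(x + y)^N = ±z^N = 0`, and `2 (xy)ʲ ≡ (xy)ʲ + (yx)ʲ = z^{2j}` lies in `T`.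

For `1 ≤ j` and `2j ≤ N` the class of `(xy)ʲ` is detected by `M ↦ [t^{2j}] tr M` on the
representation `x ↦ t E₀₁, y ↦ t E₁₀, z ↦ x + y` of `ℤ⟨x,y,z⟩` in `M₂(𝔽₂[t])`. It is a trace, kills
all powers of `x`, `y`, `x + y`, and takes the value `1` on `(xy)ʲ`. Every product `c z^N` maps to
`t^{2j}` times a matrix whose constant term is scalar, hence of trace zero mod 2, so the relators
lie in the radical of this trace form, which is a two-sided ideal; the trace therefore descends
to `A`.
-/

noncomputable section

/-- The generator `z`. -/
def zF : F3 := FreeAlgebra.ι ℤ 2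

/-- The relations presenting `A = ℤ⟨x,y,z⟩/((x+y+z, x^{e₁}, y^{e₂}, z^{e₃}))`. -/
def relD (e₁ e₂ e₃ : ℕ) : F3 → F3 → Prop := fun a b =>
  a ∈ ({xF + yF + zF, xF ^ e₁, yF ^ e₂, zF ^ e₃} : Set F3) ∧ b = 0

/-- `A = ℤ⟨x,y,z⟩/((x+y+z, x^{e₁}, y^{e₂}, z^{e₃}))`. -/
abbrev AD (e₁ e₂ e₃ : ℕ) : Type := RingQuot (relD e₁ e₂ e₃)

/-- The quotient map. -/
def πD (e₁ e₂ e₃ : ℕ) : F3 →+* AD e₁ e₂ e₃ := RingQuot.mkRingHom _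

/-- The image of `x` in `A`. -/
def xD (e₁ e₂ e₃ : ℕ) : AD e₁ e₂ e₃ := πD e₁ e₂ e₃ xF

/-- The image of `y` in `A`. -/
def yD (e₁ e₂ e₃ : ℕ) : AD e₁ e₂ e₃ := πD e₁ e₂ e₃ yF

/-- The image of `z` in `A`. -/
def zD (e₁ e₂ e₃ : ℕ) : AD e₁ e₂ e₃ := πD e₁ e₂ e₃ zF

/-- The set of all powers `x^q, y^q, z^q` with `q ≥ 1`. -/
def powSet (e₁ e₂ e₃ : ℕ) : Set (AD e₁ e₂ e₃) :=
  {u | ∃ q : ℕ, 1 ≤ q ∧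
    (u = xD e₁ e₂ e₃ ^ q ∨ u = yD e₁ e₂ e₃ ^ q ∨ u = zD e₁ e₂ e₃ ^ q)}

/-- The additive subgroup `[A,A] + T` generated by all commutators and all powers of
the generators. -/
def NSub (e₁ e₂ e₃ : ℕ) : AddSubgroup (AD e₁ e₂ e₃) :=
  AddSubgroup.closure
    ({x | ∃ a b : AD e₁ e₂ e₃, x = a * b - b * a} ∪ powSet e₁ e₂ e₃)

/-- `Λ := A/([A,A] + T)`. -/
abbrev Lam (e₁ e₂ e₃ : ℕ) : Type := AD e₁ e₂ e₃ ⧸ NSub e₁ e₂ e₃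

/-- The quotient map `A → Λ`. -/
def mkL (e₁ e₂ e₃ : ℕ) : AD e₁ e₂ e₃ →+ Lam e₁ e₂ e₃ := QuotientAddGroup.mk' _

/-- The monomials of `A` of degree `m` (each generator having degree 2). -/
def monD (e₁ e₂ e₃ m : ℕ) : Set (AD e₁ e₂ e₃) :=
  {u | ∃ w : List (Fin 3), 2 * w.length = m ∧
    u = (w.map fun i => πD e₁ e₂ e₃ (FreeAlgebra.ι ℤ i)).prod}

/-- The degree-`m` graded component `Λ_m` of `Λ`: the image in `Λ` of the `ℤ`-span of
the degree-`m` monomials of `A`. -/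
def LamGrade (e₁ e₂ e₃ m : ℕ) : AddSubgroup (Lam e₁ e₂ e₃) :=
  AddSubgroup.map (mkL e₁ e₂ e₃) (AddSubgroup.closure (monD e₁ e₂ e₃ m))

section TraceRadical

variable {R G : Type*} [Ring R] [AddCommGroup G]

def traceRadical (τ : R →+ G) (hτ : ∀ a b, τ (a * b) = τ (b * a)) : TwoSidedIdeal R :=
  TwoSidedIdeal.mk' {a | ∀ b, τ (b * a) = 0} (fun b => by rw [mul_zero, map_zero])
    (fun ha hb b => by rw [mul_add, map_add, ha b, hb b, add_zero])
    (fun ha b => by rw [mul_neg, map_neg, ha b, neg_zero])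
    (fun hy b => by rw [← mul_assoc]; exact hy _)
    (fun {x y} hx b => by rw [← mul_assoc, hτ, ← mul_assoc]; exact hx _)

variable {τ : R →+ G} {hτ : ∀ a b, τ (a * b) = τ (b * a)}

lemma mem_traceRadical {a : R} : a ∈ traceRadical τ hτ ↔ ∀ b, τ (b * a) = 0 :=
  TwoSidedIdeal.mem_mk' _ _ _ _ _ _ _

lemma apply_eq_zero_of_mem_traceRadical {a : R} (ha : a ∈ traceRadical τ hτ) : τ a = 0 := by
  simpa using mem_traceRadical.1 ha 1

variable {r : R → R → Prop}

lemma RingQuot.ker_mkRingHom_le_ker_of_traceRadical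
    (hr : ∀ ⦃a b⦄, r a b → a - b ∈ traceRadical τ hτ) :
    (RingQuot.mkRingHom r).toAddMonoidHom.ker ≤ τ.ker := by
  let I := traceRadical τ hτ
  let ψ : RingQuot r →+* I.ringCon.Quotient := RingQuot.lift
    ⟨I.ringCon.mk', fun a b hab => (RingCon.eq _).2 ((I.rel_iff a b).2 (hr hab))⟩
  intro a ha
  have hψ : ψ (RingQuot.mkRingHom r a) = I.ringCon.mk' a := RingQuot.lift_mkRingHom_apply _ _ a
  rw [show RingQuot.mkRingHom r a = 0 from ha, map_zero, ← map_zero I.ringCon.mk'] at hψ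
  exact apply_eq_zero_of_mem_traceRadical ((I.mem_iff a).2 ((RingCon.eq _).1 hψ.symm))

def RingQuot.liftTrace (hr : ∀ ⦃a b⦄, r a b → a - b ∈ traceRadical τ hτ) : RingQuot r →+ G :=
  (RingQuot.mkRingHom r).toAddMonoidHom.liftOfSurjective (RingQuot.mkRingHom_surjective r)
    ⟨τ, RingQuot.ker_mkRingHom_le_ker_of_traceRadical hr⟩

variable (hr : ∀ ⦃a b⦄, r a b → a - b ∈ traceRadical τ hτ)

lemma RingQuot.liftTrace_mkRingHom (a : R) : RingQuot.liftTrace hr (RingQuot.mkRingHom r a) = τ a :=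
  AddMonoidHom.liftOfRightInverse_comp_apply _ _ _ _ a

lemma RingQuot.liftTrace_mul_comm (u v : RingQuot r) :
    RingQuot.liftTrace hr (u * v) = RingQuot.liftTrace hr (v * u) := by
  obtain ⟨a, rfl⟩ := RingQuot.mkRingHom_surjective r u
  obtain ⟨b, rfl⟩ := RingQuot.mkRingHom_surjective r v
  rw [← map_mul, ← map_mul, liftTrace_mkRingHom, liftTrace_mkRingHom, hτ]

end TraceRadical

section Presentation

variable {e₁ e₂ e₃ : ℕ}

lemma πD_eq_zero_of_mem {a : F3} (ha : a ∈ ({xF + yF + zF, xF ^ e₁, yF ^ e₂, zF ^ e₃} : Set F3)) :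
    πD e₁ e₂ e₃ a = 0 := by
  rw [← map_zero (πD e₁ e₂ e₃)]
  exact RingQuot.mkRingHom_rel ⟨ha, rfl⟩

lemma xD_add_yD_add_zD : xD e₁ e₂ e₃ + yD e₁ e₂ e₃ + zD e₁ e₂ e₃ = 0 := by
  rw [xD, yD, zD, ← map_add, ← map_add, πD_eq_zero_of_mem (by simp)]

lemma xD_pow : xD e₁ e₂ e₃ ^ e₁ = 0 := by
  rw [xD, ← map_pow, πD_eq_zero_of_mem (by simp)]

lemma yD_pow : yD e₁ e₂ e₃ ^ e₂ = 0 := by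
  rw [yD, ← map_pow, πD_eq_zero_of_mem (by simp)]

lemma zD_pow : zD e₁ e₂ e₃ ^ e₃ = 0 := by
  rw [zD, ← map_pow, πD_eq_zero_of_mem (by simp)]

lemma zD_eq_neg : zD e₁ e₂ e₃ = -(xD e₁ e₂ e₃ + yD e₁ e₂ e₃) :=
  eq_neg_of_add_eq_zero_right xD_add_yD_add_zD

lemma zD_pow_two_mul (j : ℕ) :
    zD e₁ e₂ e₃ ^ (2 * j) = (xD e₁ e₂ e₃ + yD e₁ e₂ e₃) ^ (2 * j) := by
  rw [zD_eq_neg]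
  exact Even.neg_pow (even_two_mul j) (xD e₁ e₂ e₃ + yD e₁ e₂ e₃)

lemma zD_mul (a : AD e₁ e₂ e₃) : zD e₁ e₂ e₃ * a = -(xD e₁ e₂ e₃ * a + yD e₁ e₂ e₃ * a) := by
  rw [zD_eq_neg, ← add_mul]
  exact neg_mul (xD e₁ e₂ e₃ + yD e₁ e₂ e₃) a

lemma mkL_eq_zero_iff {u : AD e₁ e₂ e₃} : mkL e₁ e₂ e₃ u = 0 ↔ u ∈ NSub e₁ e₂ e₃ :=
  QuotientAddGroup.eq_zero_iff u

lemma mkL_mul_comm (a b : AD e₁ e₂ e₃) : mkL e₁ e₂ e₃ (a * b) = mkL e₁ e₂ e₃ (b * a) := by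
  rw [← sub_eq_zero, ← map_sub, mkL_eq_zero_iff]
  exact AddSubgroup.subset_closure (Or.inl ⟨a, b, rfl⟩)

lemma mkL_eq_zero_of_mem_powSet {u : AD e₁ e₂ e₃} (hu : u ∈ powSet e₁ e₂ e₃) :
    mkL e₁ e₂ e₃ u = 0 :=
  mkL_eq_zero_iff.2 (AddSubgroup.subset_closure (Or.inr hu))

end Presentation

section Alternating

variable {N : ℕ}

variable (N) in
def gen : Bool → AD 2 2 N
  | false => xD 2 2 N
  | true => yD 2 2 N

variable (N) in
def alt : Bool → ℕ → AD 2 2 N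
  | _, 0 => 1
  | s, ℓ + 1 => gen N s * alt (!s) ℓ

lemma gen_mul_self (s : Bool) : gen N s * gen N s = 0 := by
  cases s
  · exact (sq _).symm.trans xD_pow
  · exact (sq _).symm.trans yD_pow

lemma gen_add_gen_not (s : Bool) : gen N s + gen N (!s) = xD 2 2 N + yD 2 2 N := by
  cases s
  · rfl
  · exact add_comm _ _

lemma mkL_gen (s : Bool) : mkL 2 2 N (gen N s) = 0 := by
  refine mkL_eq_zero_of_mem_powSet ⟨1, le_rfl, ?_⟩
  cases s
  · exact Or.inl (pow_one _).symm
  · exact Or.inr (Or.inl (pow_one _).symm)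

lemma alt_succ_eq_gen_mul_pow (s : Bool) (ℓ : ℕ) :
    alt N s (ℓ + 1) = gen N s * (xD 2 2 N + yD 2 2 N) ^ ℓ := by
  induction ℓ generalizing s with
  | zero => rw [pow_zero, mul_one]; exact mul_one _
  | succ ℓ ih =>
    have hx : gen N s * (xD 2 2 N + yD 2 2 N) = gen N s * gen N (!s) := by
      rw [← gen_add_gen_not s, mul_add, gen_mul_self, zero_add]
    rw [pow_succ', ← mul_assoc, hx, mul_assoc, ← ih]
    rfl

lemma add_pow_succ (ℓ : ℕ) :
    (xD 2 2 N + yD 2 2 N) ^ (ℓ + 1) = alt N false (ℓ + 1) + alt N true (ℓ + 1) := by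
  rw [alt_succ_eq_gen_mul_pow, alt_succ_eq_gen_mul_pow, ← add_mul, pow_succ']
  rfl

lemma xD_add_yD_pow : (xD 2 2 N + yD 2 2 N) ^ N = 0 := by
  rw [← neg_neg (xD 2 2 N + yD 2 2 N), ← zD_eq_neg, neg_pow, zD_pow, mul_zero]

lemma alt_eq_zero (s : Bool) {ℓ : ℕ} (h : N ≤ ℓ) : alt N s (ℓ + 1) = 0 := by
  rw [alt_succ_eq_gen_mul_pow, pow_eq_zero_of_le h xD_add_yD_pow, mul_zero]

lemma alt_two_mul (s : Bool) (j : ℕ) : alt N s (2 * j) = (gen N s * gen N (!s)) ^ j := by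
  induction j with
  | zero => rw [Nat.mul_zero, pow_zero]; rfl
  | succ j ih =>
    show gen N s * (gen N (!s) * alt N (!!s) (2 * j)) = _
    rw [Bool.not_not, ih, ← mul_assoc, pow_succ']

lemma gen_mul_alt_eq_zero_or (b s : Bool) (ℓ : ℕ) :
    gen N b * alt N s ℓ = 0 ∨ gen N b * alt N s ℓ = alt N b (ℓ + 1) := by
  rcases Bool.eq_or_eq_not b s with rfl | rfl
  · rcases ℓ with _ | ℓ
    · exact Or.inr rfl
    · exact Or.inl (by rw [alt, ← mul_assoc, gen_mul_self, zero_mul])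
  · exact Or.inr (by rw [alt, Bool.not_not])

lemma gen_mul_pow_mul_gen (s : Bool) (j : ℕ) :
    gen N s * (gen N (!s) * gen N s) ^ j = (gen N s * gen N (!s)) ^ j * gen N s :=
  SemiconjBy.pow_right (mul_assoc _ _ _).symm j

lemma mkL_alt_odd (s : Bool) (j : ℕ) : mkL 2 2 N (alt N s (2 * j + 1)) = 0 := by
  rw [alt, alt_two_mul, Bool.not_not, mkL_mul_comm]
  rcases j with _ | j
  · rw [pow_zero, one_mul, mkL_gen]
  · rw [pow_succ, mul_assoc, mul_assoc, gen_mul_self, mul_zero, mul_zero, map_zero]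

lemma mkL_alt_not (s : Bool) (ℓ : ℕ) : mkL 2 2 N (alt N s ℓ) = mkL 2 2 N (alt N (!s) ℓ) := by
  obtain ⟨j, rfl | rfl⟩ := Nat.even_or_odd' ℓ
  · rcases j with _ | j
    · rfl
    · rw [alt_two_mul, alt_two_mul, Bool.not_not, pow_succ', mul_assoc, mkL_mul_comm,
        mul_assoc, ← gen_mul_pow_mul_gen, ← mul_assoc, ← pow_succ']
  · rw [mkL_alt_odd, mkL_alt_odd]

lemma alt_mem_monD (s : Bool) (ℓ : ℕ) : alt N s ℓ ∈ monD 2 2 N (2 * ℓ) := by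
  induction ℓ generalizing s with
  | zero => exact ⟨[], rfl, rfl⟩
  | succ ℓ ih =>
    obtain ⟨w, hw, hprod⟩ := ih (!s)
    refine ⟨(cond s 1 0) :: w, by rw [List.length_cons]; omega, ?_⟩
    rw [List.map_cons, List.prod_cons, ← hprod]
    cases s <;> rfl

end Alternating

section Grading

open AddSubgroup

variable {N : ℕ}

variable (N) in
def altSpan (ℓ : ℕ) : AddSubgroup (AD 2 2 N) := closure {alt N false ℓ, alt N true ℓ}

lemma gen_mul_alt_mem_altSpan (b s : Bool) (ℓ : ℕ) : gen N b * alt N s ℓ ∈ altSpan N (ℓ + 1) := by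
  rcases gen_mul_alt_eq_zero_or b s ℓ with h | h <;> rw [h]
  · exact zero_mem _
  · cases b
    · exact subset_closure (Or.inl rfl)
    · exact subset_closure (Or.inr rfl)

lemma mul_mem_altSpan (i : Fin 3) {ℓ : ℕ} {u : AD 2 2 N} (hu : u ∈ altSpan N ℓ) :
    πD 2 2 N (FreeAlgebra.ι ℤ i) * u ∈ altSpan N (ℓ + 1) := by
  have hgen (s : Bool) : πD 2 2 N (FreeAlgebra.ι ℤ i) * alt N s ℓ ∈ altSpan N (ℓ + 1) := by
    fin_cases i
    · exact gen_mul_alt_mem_altSpan false s ℓ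
    · exact gen_mul_alt_mem_altSpan true s ℓ
    · change zD 2 2 N * alt N s ℓ ∈ _
      rw [zD_mul]
      exact neg_mem (add_mem (gen_mul_alt_mem_altSpan false s ℓ)
        (gen_mul_alt_mem_altSpan true s ℓ))
  refine ((closure_le _).2 ?_ :
    altSpan N ℓ ≤ (altSpan N (ℓ + 1)).comap (AddMonoidHom.mulLeft _)) hu
  rintro _ (rfl | rfl)
  exacts [hgen false, hgen true]

lemma prod_mem_altSpan (w : List (Fin 3)) :
    (w.map fun i => πD 2 2 N (FreeAlgebra.ι ℤ i)).prod ∈ altSpan N w.length := by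
  induction w with
  | nil => exact subset_closure (Or.inl rfl)
  | cons i w ih =>
    rw [List.map_cons, List.prod_cons, List.length_cons]
    exact mul_mem_altSpan i ih

lemma LamGrade_le_closure_alt (m : ℕ) :
    LamGrade 2 2 N m ≤ closure {mkL 2 2 N (alt N false (m / 2))} := by
  rw [LamGrade, map_le_iff_le_comap, closure_le]
  rintro _ ⟨w, hw, rfl⟩
  have hℓ : w.length = m / 2 := by omega
  refine ((closure_le _).2 ?_ : altSpan N (m / 2) ≤ _) (hℓ ▸ prod_mem_altSpan w)
  rintro _ (rfl | rfl)
  · exact subset_closure rfl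
  · rw [SetLike.mem_coe, mem_comap, mkL_alt_not]
    exact subset_closure rfl

lemma LamGrade_odd {m : ℕ} (hm : Odd m) : LamGrade 2 2 N m = ⊥ := by
  rw [eq_bot_iff, LamGrade, map_le_iff_le_comap, closure_le]
  rintro _ ⟨w, hw, -⟩
  obtain ⟨k, rfl⟩ := hm
  omega

lemma LamGrade_four_mul (j : ℕ) :
    LamGrade 2 2 N (4 * j) = closure {mkL 2 2 N ((xD 2 2 N * yD 2 2 N) ^ j)} := by
  have hxy : alt N false (2 * j) = (xD 2 2 N * yD 2 2 N) ^ j := alt_two_mul false j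
  refine le_antisymm ?_ ((closure_le _).2 ?_)
  · have h := LamGrade_le_closure_alt (N := N) (4 * j)
    rwa [show 4 * j / 2 = 2 * j by omega, hxy] at h
  · rintro _ rfl
    rw [← hxy, show 4 * j = 2 * (2 * j) by ring]
    exact mem_map_of_mem _ (subset_closure (alt_mem_monD false _))

lemma LamGrade_eq_bot {m : ℕ} (hm : ¬ (4 ∣ m ∧ m ≤ 2 * N)) : LamGrade 2 2 N m = ⊥ := by
  obtain ⟨ℓ, rfl | rfl⟩ := Nat.even_or_odd' m
  · suffices mkL 2 2 N (alt N false ℓ) = 0 by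
      have h := LamGrade_le_closure_alt (N := N) (2 * ℓ)
      rwa [Nat.mul_div_cancel_left _ two_pos, this, closure_singleton_zero, le_bot_iff] at h
    obtain ⟨j, rfl | rfl⟩ := Nat.even_or_odd' ℓ
    · obtain ⟨i, hi, hNi⟩ : ∃ i, 2 * j = i + 1 ∧ N ≤ i := ⟨2 * j - 1, by omega, by omega⟩
      rw [hi, alt_eq_zero false hNi, map_zero]
    · exact mkL_alt_odd false j
  · exact LamGrade_odd (odd_two_mul_add_one ℓ)

end Grading

section Detection

open Polynomial Matrix

variable {n R : Type*} [Fintype n] [CommSemiring R]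

variable (n R) in
def traceCoeff (k : ℕ) : Matrix n n R[X] →+ R :=
  (lcoeff R k).toAddMonoidHom.comp (traceAddMonoidHom n R[X])

lemma traceCoeff_apply (k : ℕ) (M : Matrix n n R[X]) :
    traceCoeff n R k M = (trace M).coeff k := rfl

lemma traceCoeff_mul_comm (k : ℕ) (M M' : Matrix n n R[X]) :
    traceCoeff n R k (M * M') = traceCoeff n R k (M' * M) := by
  rw [traceCoeff_apply, traceCoeff_apply, trace_mul_comm]

def matX : Matrix (Fin 2) (Fin 2) (ZMod 2)[X] := !![0, X; 0, 0]

def matY : Matrix (Fin 2) (Fin 2) (ZMod 2)[X] := !![0, 0; X, 0]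

lemma matX_mul_self : matX * matX = 0 := by
  ext i j : 1; fin_cases i <;> fin_cases j <;> simp [matX, mul_apply]

lemma matY_mul_self : matY * matY = 0 := by
  ext i j : 1; fin_cases i <;> fin_cases j <;> simp [matY, mul_apply]

lemma matX_add_matY_sq : (matX + matY) ^ 2 = (X ^ 2 : (ZMod 2)[X]) • 1 := by
  ext i j : 1; fin_cases i <;> fin_cases j <;> simp [matX, matY, sq, mul_apply]

lemma matX_add_matY_pow_two_mul (i : ℕ) :
    (matX + matY) ^ (2 * i) = (X ^ (2 * i) : (ZMod 2)[X]) • 1 := by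
  rw [pow_mul, matX_add_matY_sq, _root_.smul_pow, one_pow, ← pow_mul]

lemma matX_mul_matY_pow (k : ℕ) : (matX * matY) ^ (k + 1) = !![X ^ (2 * (k + 1)), 0; 0, 0] := by
  induction k with
  | zero => ext i j : 1; fin_cases i <;> fin_cases j <;> simp [matX, matY, sq]
  | succ k ih =>
    rw [pow_succ, ih]
    ext i j : 1; fin_cases i <;> fin_cases j <;> simp [matX, matY, mul_apply]; ring

lemma trace_one_fin_two : trace (1 : Matrix (Fin 2) (Fin 2) (ZMod 2)[X]) = 0 := by
  simp [trace_one, CharTwo.two_eq_zero]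

lemma trace_pow_eq_zero_of_mul_self_eq_zero {M : Matrix (Fin 2) (Fin 2) (ZMod 2)[X]}
    (h₁ : trace M = 0) (h₂ : M * M = 0) (q : ℕ) : trace (M ^ q) = 0 := by
  rcases q with _ | _ | q
  · exact trace_one_fin_two
  · rwa [pow_one]
  · rw [pow_succ, pow_succ, mul_assoc, h₂, mul_zero, trace_zero]

lemma trace_matX_add_matY_pow (q : ℕ) : trace ((matX + matY) ^ q) = 0 := by
  obtain ⟨i, rfl | rfl⟩ := Nat.even_or_odd' q
  · rw [matX_add_matY_pow_two_mul, trace_smul, trace_one_fin_two, smul_zero]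
  · rw [pow_succ, matX_add_matY_pow_two_mul, smul_mul_assoc, one_mul, trace_smul]
    simp [matX, matY, trace_fin_two]

def repF : F3 →ₐ[ℤ] Matrix (Fin 2) (Fin 2) (ZMod 2)[X] :=
  FreeAlgebra.lift ℤ ![matX, matY, matX + matY]

lemma repF_xF : repF xF = matX := FreeAlgebra.lift_ι_apply _ _
lemma repF_yF : repF yF = matY := FreeAlgebra.lift_ι_apply _ _
lemma repF_zF : repF zF = matX + matY := FreeAlgebra.lift_ι_apply _ _

lemma coeff_zero_trace_repF (f : F3) : (trace (repF f)).coeff 0 = 0 := by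
  have h : (evalRingHom 0).mapMatrix (repF f) = algebraMap ℤ _ (FreeAlgebra.algebraMapInv f) := by
    induction f using FreeAlgebra.induction with
    | grade0 r => simp
    | grade1 i =>
      fin_cases i <;> ext j k : 1 <;> fin_cases j <;> fin_cases k <;>
        simp [repF, matX, matY, FreeAlgebra.algebraMapInv]
    | mul a b ha hb => simp only [map_mul, ha, hb]
    | add a b ha hb => simp only [map_add, ha, hb]
  rw [coeff_zero_eq_eval_zero, ← coe_evalRingHom, AddMonoidHom.map_trace,
    ← RingHom.mapMatrix_apply, h, Algebra.algebraMap_eq_smul_one, trace_smul, trace_one]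
  exact smul_zero _

def repTrace (k : ℕ) : F3 →+ ZMod 2 :=
  (traceCoeff (Fin 2) (ZMod 2) k).comp repF.toRingHom.toAddMonoidHom

lemma repTrace_apply (k : ℕ) (f : F3) : repTrace k f = (trace (repF f)).coeff k := rfl

lemma repTrace_mul_comm (k : ℕ) (f g : F3) : repTrace k (f * g) = repTrace k (g * f) := by
  simp only [repTrace, AddMonoidHom.comp_apply, RingHom.toAddMonoidHom_eq_coe,
    AddMonoidHom.coe_coe, map_mul, traceCoeff_mul_comm]

lemma relD_sub_mem_traceRadical {N k : ℕ} (hk : 2 * k ≤ N) ⦃a b : F3⦄ (h : relD 2 2 N a b) :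
    a - b ∈ traceRadical (repTrace (2 * k)) (repTrace_mul_comm _) := by
  obtain ⟨ha, rfl⟩ := h
  rw [sub_zero, mem_traceRadical]
  intro c
  simp only [Set.mem_insert_iff, Set.mem_singleton_iff] at ha
  rcases ha with rfl | rfl | rfl | rfl
  · rw [repTrace_apply, map_mul, map_add, map_add, repF_xF, repF_yF, repF_zF,
      CharTwo.add_self_eq_zero, mul_zero, trace_zero, coeff_zero]
  · rw [repTrace_apply, map_mul, map_pow, repF_xF, sq, matX_mul_self, mul_zero, trace_zero,
      coeff_zero]
  · rw [repTrace_apply, map_mul, map_pow, repF_yF, sq, matY_mul_self, mul_zero, trace_zero,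
      coeff_zero]
  · rw [repTrace_apply, ← Nat.sub_add_cancel hk, pow_add, ← mul_assoc, map_mul, map_pow repF,
      repF_zF, matX_add_matY_pow_two_mul, mul_smul_one, trace_smul, smul_eq_mul,
      coeff_X_pow_mul', if_pos le_rfl, Nat.sub_self, coeff_zero_trace_repF]

def traceFunctional {N k : ℕ} (hk : 2 * k ≤ N) : AD 2 2 N →+ ZMod 2 :=
  RingQuot.liftTrace (relD_sub_mem_traceRadical hk)

lemma traceFunctional_πD {N k : ℕ} (hk : 2 * k ≤ N) (f : F3) :
    traceFunctional hk (πD 2 2 N f) = (trace (repF f)).coeff (2 * k) :=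
  RingQuot.liftTrace_mkRingHom _ f

lemma NSub_le_ker_traceFunctional {N k : ℕ} (hk : 2 * k ≤ N) :
    NSub 2 2 N ≤ (traceFunctional hk).ker := by
  rw [NSub, AddSubgroup.closure_le]
  rintro _ (⟨a, b, rfl⟩ | ⟨q, -, rfl | rfl | rfl⟩) <;>
    simp only [SetLike.mem_coe, AddMonoidHom.mem_ker]
  · rw [map_sub, traceFunctional, RingQuot.liftTrace_mul_comm, sub_self]
  · rw [xD, ← map_pow, traceFunctional_πD, map_pow, repF_xF,
      trace_pow_eq_zero_of_mul_self_eq_zero (by simp [matX, trace_fin_two]) matX_mul_self,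
      coeff_zero]
  · rw [yD, ← map_pow, traceFunctional_πD, map_pow, repF_yF,
      trace_pow_eq_zero_of_mul_self_eq_zero (by simp [matY, trace_fin_two]) matY_mul_self,
      coeff_zero]
  · rw [zD, ← map_pow, traceFunctional_πD, map_pow, repF_zF, trace_matX_add_matY_pow, coeff_zero]

lemma traceFunctional_xD_mul_yD_pow {N k : ℕ} (hk₀ : k ≠ 0) (hk : 2 * k ≤ N) :
    traceFunctional hk ((xD 2 2 N * yD 2 2 N) ^ k) = 1 := by
  obtain ⟨j, rfl⟩ := Nat.exists_eq_succ_of_ne_zero hk₀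
  rw [xD, yD, ← map_mul, ← map_pow, traceFunctional_πD, map_pow, map_mul, repF_xF, repF_yF,
    matX_mul_matY_pow]
  simp [trace_fin_two]

lemma xD_mul_yD_pow_not_mem_NSub {N k : ℕ} (hk₀ : k ≠ 0) (hk : 2 * k ≤ N) :
    (xD 2 2 N * yD 2 2 N) ^ k ∉ NSub 2 2 N := fun h => by
  simpa [traceFunctional_xD_mul_yD_pow hk₀ hk] using NSub_le_ker_traceFunctional hk h

end Detection

section Order

variable {N : ℕ}

lemma two_nsmul_mkL_xD_mul_yD_pow {j : ℕ} (hj₀ : j ≠ 0) :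
    2 • mkL 2 2 N ((xD 2 2 N * yD 2 2 N) ^ j) = 0 := by
  have hz : mkL 2 2 N (zD 2 2 N ^ (2 * j)) = 0 :=
    mkL_eq_zero_of_mem_powSet ⟨_, by omega, Or.inr (Or.inr rfl)⟩
  obtain ⟨i, hi⟩ : ∃ i, 2 * j = i + 1 := ⟨2 * j - 1, by omega⟩
  rwa [zD_pow_two_mul, hi, add_pow_succ, map_add, mkL_alt_not true, Bool.not_true, ← two_nsmul,
    ← hi, alt_two_mul] at hz

lemma addOrderOf_mkL_xD_mul_yD_pow {j : ℕ} (hj₀ : j ≠ 0) (hj : 2 * j ≤ N) :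
    addOrderOf (mkL 2 2 N ((xD 2 2 N * yD 2 2 N) ^ j)) = 2 :=
  addOrderOf_eq_prime (two_nsmul_mkL_xD_mul_yD_pow hj₀)
    (fun h => xD_mul_yD_pow_not_mem_NSub hj₀ hj (mkL_eq_zero_iff.1 h))

end Order

theorem stmt_17_general (n : ℕ) (m : ℕ) (hm : 1 ≤ m) :
    (¬ (4 ∣ m ∧ m ≤ 2 * (n - 2)) → LamGrade 2 2 (n - 2) m = ⊥) ∧
    (4 ∣ m → m ≤ 2 * (n - 2) →
      LamGrade 2 2 (n - 2) m
        = AddSubgroup.closure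
            {mkL 2 2 (n - 2) ((xD 2 2 (n - 2) * yD 2 2 (n - 2)) ^ (m / 4))} ∧
      Nat.card ↥(LamGrade 2 2 (n - 2) m) = 2) := by
  refine ⟨LamGrade_eq_bot, fun ⟨j, hj⟩ hle => ?_⟩
  subst hj
  rw [Nat.mul_div_cancel_left j four_pos, LamGrade_four_mul]
  refine ⟨rfl, ?_⟩
  rw [← AddSubgroup.zmultiples_eq_closure, Nat.card_zmultiples,
    addOrderOf_mkL_xD_mul_yD_pow (by omega) (by omega)]

/-- For `A = ℤ⟨x,y,z⟩/((x+y+z, x², y², z^{n−2}))` with `n ≥ 4` (type `D_n`): for every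
`m ≥ 1`, `Λ_m = 0` unless `4 ∣ m` and `m ≤ 2(n−2)`; and for each such `m`, `Λ_m` is a
cyclic group of order 2 generated by the class of `(xy)^{m/4}`. -/
theorem stmt_17 (n : ℕ) (hn : 4 ≤ n) (m : ℕ) (hm : 1 ≤ m) :
    (¬ (4 ∣ m ∧ m ≤ 2 * (n - 2)) → LamGrade 2 2 (n - 2) m = ⊥) ∧
    (4 ∣ m → m ≤ 2 * (n - 2) →
      LamGrade 2 2 (n - 2) m
        = AddSubgroup.closure
            {mkL 2 2 (n - 2) ((xD 2 2 (n - 2) * yD 2 2 (n - 2)) ^ (m / 4))} ∧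
      Nat.card ↥(LamGrade 2 2 (n - 2) m) = 2) :=
  stmt_17_general n m hm
end
end
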